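/- arXiv:2604.21900 — 14 statements merged into one kernel-verified Lean document; each statement's English description precedes it below -/
import Mathlib

section
/- If (m₁, m₂, m₃) is a Markov triple, then 3 does not divide m₁, 3 does not divide m₂, and 3 does not divide m₃. -/
/-- The equation `a² + b² + c² = 9abc` has no positive solutions (Hurwitz/Vieta descent). -/
lemma no_sol_nine : ∀ n a b c : ℕ, a + b + c = n → 0 < a → 0 < b → 0 < c →
    a ^ 2 + b ^ 2 + c ^ 2 = 9 * (a * b * c) → False := by
  intro n
  induction n using Nat.strong_induction_on with
  | _ n ih =>
    have key : ∀ a b c : ℕ, a + b + c = n → 0 < a → a ≤ b → b ≤ c →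
        a ^ 2 + b ^ 2 + c ^ 2 = 9 * (a * b * c) → False := by
      intro a b c hn ha hab hbc heq
      have hb : 0 < b := lt_of_lt_of_le ha hab
      have hc : 0 < c := lt_of_lt_of_le hb hbc
      have h1 : c ≤ 9 * (a * b) := by nlinarith
      have h2 : 3 * (a * b) ≤ c := by nlinarith
      set d := 9 * (a * b) - c with hd
      have hdc : d + c = 9 * (a * b) := by omega
      have hmul : d * c = a ^ 2 + b ^ 2 := by nlinarith
      have hdpos : 0 < d := by nlinarith
      have hdlt : d < c := by nlinarith
      have heq2 : a ^ 2 + b ^ 2 + d ^ 2 = 9 * (a * b * d) := by nlinarith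
      exact ih (a + b + d) (by omega) a b d rfl ha hb hdpos heq2
    intro a b c hn ha hb hc heq
    rcases le_total a b with hab | hab <;> rcases le_total b c with hbc | hbc <;>
      rcases le_total a c with hac | hac
    · exact key a b c (by omega) ha hab hbc heq
    · exact key a b c (by omega) ha hab hbc heq
    · exact key a c b (by omega) ha hac hbc (by rw [show a * c * b = a * b * c from by ring]; linarith)
    · exact key c a b (by omega) hc hac hab (by rw [show c * a * b = a * b * c from by ring]; linarith)
    · exact key b a c (by omega) hb hab hac (by rw [show b * a * c = a * b * c from by ring]; linarith)
    · exact key b c a (by omega) hb hbc hac (by rw [show b * c * a = a * b * c from by ring]; linarith)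
    · exact key a c b (by omega) ha hac hbc (by rw [show a * c * b = a * b * c from by ring]; linarith)
    · exact key c b a (by omega) hc hbc hab (by rw [show c * b * a = a * b * c from by ring]; linarith)

lemma sq_mod_three (m : ℕ) : m ^ 2 % 3 = 0 ∧ 3 ∣ m ∨ m ^ 2 % 3 = 1 ∧ ¬ 3 ∣ m := by
  have hp := Nat.pow_mod m 2 3
  have h3 : m % 3 = 0 ∨ m % 3 = 1 ∨ m % 3 = 2 := by omega
  rcases h3 with h | h | h <;> rw [h] at hp <;> norm_num at hp <;> omega

/-- If `(m₁, m₂, m₃)` is a Markov triple (a triple of positive integers with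
`m₁² + m₂² + m₃² = 3·m₁·m₂·m₃`), then none of `m₁, m₂, m₃` is divisible by 3. -/
theorem markov_not_dvd_three (m₁ m₂ m₃ : ℕ) (h₁ : 0 < m₁) (h₂ : 0 < m₂) (h₃ : 0 < m₃)
    (h : m₁ ^ 2 + m₂ ^ 2 + m₃ ^ 2 = 3 * m₁ * m₂ * m₃) :
    ¬ (3 ∣ m₁) ∧ ¬ (3 ∣ m₂) ∧ ¬ (3 ∣ m₃) := by
  have key : ¬ (3 ∣ m₁ ∧ 3 ∣ m₂ ∧ 3 ∣ m₃) := by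
    rintro ⟨⟨a, rfl⟩, ⟨b, rfl⟩, ⟨c, rfl⟩⟩
    have ha : 0 < a := by omega
    have hb : 0 < b := by omega
    have hc : 0 < c := by omega
    exact no_sol_nine (a + b + c) a b c rfl ha hb hc (by nlinarith [h])
  have hdvd : 3 ∣ m₁ ^ 2 + m₂ ^ 2 + m₃ ^ 2 := h ▸ ⟨m₁ * m₂ * m₃, by ring⟩
  have f₁ := sq_mod_three m₁
  have f₂ := sq_mod_three m₂
  have f₃ := sq_mod_three m₃
  omega
end

section
/- Let v : ℤ → ℤ × ℤ satisfy the three-helical recursion. Then the sequence Δᵢ := χ(v(i−1), v(i)) is 3-periodic: χ(v(i+2), v(i+3)) = χ(v(i−1), v(i)) for all i ∈ ℤ. -/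
/-- The Euler pairing on `K₀(X) ≅ ℤ × ℤ`, with `u = (deg, rk)`:
`χ(u, w) = d'·r − d·r'`. -/
def chi (u w : ℤ × ℤ) : ℤ := w.1 * u.2 - u.1 * w.2

/-- A sequence `v : ℤ → ℤ × ℤ` satisfies the three-helical recursion. -/
def ThreeHelical (v : ℤ → ℤ × ℤ) : Prop :=
  ∀ i : ℤ, v (i + 3) = v i - chi (v i) (v (i + 1)) • v (i + 1) +
    (chi (v i) (v (i + 1)) * chi (v (i + 1)) (v (i + 2)) - chi (v i) (v (i + 2))) • v (i + 2)

/-- If `v` satisfies the three-helical recursion, then `Δᵢ := χ(v(i−1), v(i))` is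
3-periodic: `χ(v(i+2), v(i+3)) = χ(v(i−1), v(i))` for all `i`. -/
theorem delta_three_periodic (v : ℤ → ℤ × ℤ) (h : ThreeHelical v) (i : ℤ) :
    chi (v (i + 2)) (v (i + 3)) = chi (v (i - 1)) (v i) := by
  have h1 := h (i - 1)
  have h2 := h i
  have e1 : i - 1 + 1 = i := by ring
  have e2 : i - 1 + 2 = i + 1 := by ring
  have e3 : i - 1 + 3 = i + 2 := by ring
  rw [e1, e2, e3] at h1
  rw [h2, h1]
  simp only [chi, Prod.smul_fst, Prod.smul_snd, Prod.fst_add, Prod.snd_add,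
    Prod.fst_sub, Prod.snd_sub, smul_eq_mul]
  ring
end

section
/- The characteristic polynomial of A := A₃·A₂·A₁ equals (X − 1)·(X² − τ·X + 1), where τ := 2 + Δ₁Δ₂Δ₃ − (Δ₁² + Δ₂² + Δ₃²); in particular the eigenvalues of A are 1 and the two roots λ± = (τ ± √(τ² − 4))/2 of X² − τX + 1. -/
open Matrix Polynomial

/-- The matrix `A_j` with rows `(0,1,0)`, `(0,0,1)`, `(1, −Δ_j, Δ_{j+2})`. -/
def helixMatrix (Δ : ℤ → ℤ) (j : ℤ) : Matrix (Fin 3) (Fin 3) ℤ :=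
  !![0, 1, 0; 0, 0, 1; 1, -Δ j, Δ (j + 2)]

/-- The matrix `A := A₃ * A₂ * A₁`. -/
def helixA (Δ : ℤ → ℤ) : Matrix (Fin 3) (Fin 3) ℤ :=
  helixMatrix Δ 3 * helixMatrix Δ 2 * helixMatrix Δ 1

set_option maxHeartbeats 1000000 in
/-- The characteristic polynomial of `A := A₃·A₂·A₁` is `(X − 1)(X² − τ X + 1)` where
`τ = 2 + Δ₁Δ₂Δ₃ − (Δ₁² + Δ₂² + Δ₃²)`; in particular, the complex eigenvalues of `A`
are `1` and the two roots `(τ ± √(τ² − 4))/2` of `X² − τX + 1`. -/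
theorem helixA_charpoly (Δ : ℤ → ℤ) (hper : ∀ i : ℤ, Δ (i + 3) = Δ i)
    (τ : ℤ) (hτ : τ = 2 + Δ 1 * Δ 2 * Δ 3 - (Δ 1 ^ 2 + Δ 2 ^ 2 + Δ 3 ^ 2)) :
    (helixA Δ).charpoly = (X - 1) * (X ^ 2 - C τ * X + 1) ∧
    ∃ s : ℂ, s ^ 2 = (τ : ℂ) ^ 2 - 4 ∧
      ∀ lam : ℂ, ((helixA Δ).map (Int.cast : ℤ → ℂ)).charpoly.IsRoot lam ↔
        lam = 1 ∨ lam = ((τ : ℂ) + s) / 2 ∨ lam = ((τ : ℂ) - s) / 2 := by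
  have h5 : Δ (3 + 2) = Δ 2 := by rw [show (3 + 2 : ℤ) = 2 + 3 by ring, hper]
  have h4 : Δ (2 + 2) = Δ 1 := by rw [show (2 + 2 : ℤ) = 1 + 3 by ring, hper]
  have hcp : (helixA Δ).charpoly = (X - 1) * (X ^ 2 - C τ * X + 1) := by
    rw [Matrix.charpoly, Matrix.det_fin_three]
    simp only [helixA, helixMatrix, Matrix.mul_apply, Fin.sum_univ_three,
      charmatrix_apply, h5, h4, Matrix.cons_val', Matrix.cons_val_zero,
      Matrix.cons_val_one, Matrix.head_cons, Matrix.head_fin_const,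
      Matrix.cons_val_fin_one, Matrix.empty_val', Matrix.cons_val_two,
      Matrix.tail_cons, Matrix.diagonal_apply, Matrix.one_apply]
    subst hτ
    simp [Fin.ext_iff]
    ring
  refine ⟨hcp, ?_⟩
  obtain ⟨s, hs⟩ : ∃ s : ℂ, s ^ 2 = (τ : ℂ) ^ 2 - 4 := by
    obtain ⟨z, hz⟩ := Complex.isAlgClosed.exists_pow_nat_eq ((τ : ℂ) ^ 2 - 4) (n := 2)
      (by norm_num)
    exact ⟨z, hz⟩
  refine ⟨s, hs, fun lam => ?_⟩
  have hcoe : (helixA Δ).map (Int.cast : ℤ → ℂ) = (helixA Δ).map (Int.castRingHom ℂ) := by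
    ext i j; simp
  have hmap : ((helixA Δ).map (Int.cast : ℤ → ℂ)).charpoly
      = (helixA Δ).charpoly.map (Int.castRingHom ℂ) := by
    rw [hcoe, Matrix.charpoly_map]
  rw [IsRoot.def, hmap, hcp]
  simp only [Polynomial.map_mul, Polynomial.map_sub, Polynomial.map_add,
    Polynomial.map_pow, Polynomial.map_one, Polynomial.map_X, Polynomial.map_C,
    Polynomial.eval_mul, Polynomial.eval_sub, Polynomial.eval_add, Polynomial.eval_pow,
    Polynomial.eval_X, Polynomial.eval_one, Polynomial.eval_C, Polynomial.eval_intCast, eq_intCast, Polynomial.map_intCast]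
  have hfact : (lam - 1) * (lam ^ 2 - (τ : ℂ) * lam + 1)
      = (lam - 1) * ((lam - ((τ : ℂ) + s) / 2) * (lam - ((τ : ℂ) - s) / 2)) := by
    have : (lam - ((τ : ℂ) + s) / 2) * (lam - ((τ : ℂ) - s) / 2)
        = lam ^ 2 - (τ : ℂ) * lam + ((τ : ℂ) ^ 2 - s ^ 2) / 4 := by ring
    rw [this, hs]; ring_nf
  rw [hfact]
  rw [mul_eq_zero, mul_eq_zero, sub_eq_zero, sub_eq_zero, sub_eq_zero]
end

section
/- Let ∇ be the row vector (Δ₂, Δ₃ − Δ₁Δ₂, Δ₁). Then (1) ∇ · (A − I) = 0 (the vector-matrix product of ∇ with A − I is the zero row vector), and (2) if Δ₁ ≠ 0, then the matrix A − I, regarded as a matrix over ℚ, has rank exactly 2. -/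
/-! Periodicity turns `A` into an explicit matrix in `Δ₁, Δ₂, Δ₃`. Then `∇` is a left null vector
of `A − I`, nonzero when `Δ₁ ≠ 0`, so the rank is at most 2; the leading `2 × 2` minor of `A − I`
is `Δ₁²`, so the rank is at least 2. -/

open Matrix

namespace Matrix

variable {K m n : Type*} [Field K] [Fintype m] [Fintype n]

theorem rank_lt_card_of_vecMul_eq_zero {M : Matrix m n K} {v : m → K} (hv : v ≠ 0)
    (hvM : v ᵥ* M = 0) : M.rank < Fintype.card m := by
  have hv_ker : v ∈ LinearMap.ker Mᵀ.mulVecLin := by simpa [mulVec_transpose] using hvM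
  have hpos : 0 < Module.finrank K (LinearMap.ker Mᵀ.mulVecLin) :=
    Module.finrank_pos_iff_exists_ne_zero.2 ⟨⟨v, hv_ker⟩, by simpa using hv⟩
  have hsum := LinearMap.finrank_range_add_finrank_ker Mᵀ.mulVecLin
  rw [Module.finrank_fintype_fun_eq_card] at hsum
  rw [← rank_transpose, rank]
  omega

omit [Fintype m] in
theorem card_le_rank_of_submatrix_det_ne_zero {k : Type*} [Fintype k] [DecidableEq k]
    (M : Matrix m n K) (r : k → m) (c : k → n) (h : (M.submatrix r c).det ≠ 0) :
    Fintype.card k ≤ M.rank :=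
  (rank_of_det_ne_zero h).symm.le.trans (rank_submatrix_le M r c)

end Matrix

theorem helixA_sub_one_eq (Δ : ℤ → ℤ) (hper : ∀ i : ℤ, Δ (i + 3) = Δ i) :
    helixA Δ - 1 = !![0, -Δ 1, Δ 3;
                      Δ 1, -Δ 1 ^ 2, Δ 1 * Δ 3 - Δ 2;
                      Δ 1 * Δ 2 - Δ 3, Δ 2 + Δ 1 * Δ 3 - Δ 1 ^ 2 * Δ 2,
                        Δ 1 * Δ 2 * Δ 3 - Δ 2 ^ 2 - Δ 3 ^ 2] := by
  have h4 : Δ (2 + 2) = Δ 1 := hper 1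
  have h5 : Δ (3 + 2) = Δ 2 := hper 2
  rw [helixA, helixMatrix, helixMatrix, helixMatrix, h4, h5]
  ext i j
  fin_cases i <;> fin_cases j <;> simp [one_apply] <;> ring

theorem nabla_vecMul_helixA_sub_one (Δ : ℤ → ℤ) (hper : ∀ i : ℤ, Δ (i + 3) = Δ i) :
    ![Δ 2, Δ 3 - Δ 1 * Δ 2, Δ 1] ᵥ* (helixA Δ - 1) = 0 := by
  ext j
  rw [helixA_sub_one_eq Δ hper]
  fin_cases j <;> simp [vecMul, dotProduct, Fin.sum_univ_three] <;> ring

/-- Let `∇ = (Δ₂, Δ₃ − Δ₁Δ₂, Δ₁)`. Then (1) `∇ᵀ (A − I) = 0`, and (2) if `Δ₁ ≠ 0`,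
then `A − I` has rank 2 over `ℚ`. -/
theorem nabla_kernel_and_rank (Δ : ℤ → ℤ) (hper : ∀ i : ℤ, Δ (i + 3) = Δ i) :
    ![Δ 2, Δ 3 - Δ 1 * Δ 2, Δ 1] ᵥ* (helixA Δ - 1) = 0 ∧
    (Δ 1 ≠ 0 → ((helixA Δ - 1).map (Int.cast : ℤ → ℚ)).rank = 2) := by
  have hker := nabla_vecMul_helixA_sub_one Δ hper
  refine ⟨hker, fun h1 => ?_⟩
  have hkerℚ : (Int.castRingHom ℚ ∘ ![Δ 2, Δ 3 - Δ 1 * Δ 2, Δ 1]) ᵥ*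
      (helixA Δ - 1).map (Int.castRingHom ℚ) = 0 := by
    ext j
    rw [← RingHom.map_vecMul, hker, Pi.zero_apply, map_zero, Pi.zero_apply]
  have hnabla_ne : Int.castRingHom ℚ ∘ ![Δ 2, Δ 3 - Δ 1 * Δ 2, Δ 1] ≠ 0 :=
    fun h => h1 (by simpa using congrFun h 2)
  have hupper := rank_lt_card_of_vecMul_eq_zero hnabla_ne hkerℚ
  have hlower := card_le_rank_of_submatrix_det_ne_zero
    ((helixA Δ - 1).map (Int.cast : ℤ → ℚ)) ![0, 1] ![0, 1]
    (by rw [helixA_sub_one_eq Δ hper, det_fin_two]; simp [h1])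
  simp only [Fintype.card_fin] at hupper hlower
  exact le_antisymm (Nat.lt_succ_iff.1 hupper) hlower
end

section
/- Let Δ₁, Δ₂, Δ₃ ∈ ℤ and let v₀ = (d₀, r₀), v₁ = (d₁, r₁), v₂ = (d₂, r₂) ∈ ℤ × ℤ. Define v₃ := v₀ − χ(v₀,v₁)·v₁ + (χ(v₀,v₁)·χ(v₁,v₂) − χ(v₀,v₂))·v₂. Then (χ(v₀,v₁) = Δ₁ ∧ χ(v₁,v₂) = Δ₂ ∧ χ(v₂,v₃) = Δ₃) holds if and only if (d₀,d₁,d₂) × (r₀,r₁,r₂) = (−Δ₂, Δ₁Δ₂ − Δ₃, −Δ₁). -/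
/-- The standard cross product on `ℤ³`. -/
def cross3 (a b : Fin 3 → ℤ) : Fin 3 → ℤ :=
  ![a 1 * b 2 - a 2 * b 1, a 2 * b 0 - a 0 * b 2, a 0 * b 1 - a 1 * b 0]

/-- With `v₃ := v₀ − χ(v₀,v₁)·v₁ + (χ(v₀,v₁)χ(v₁,v₂) − χ(v₀,v₂))·v₂`, the conditions
`χ(v₀,v₁) = Δ₁`, `χ(v₁,v₂) = Δ₂`, `χ(v₂,v₃) = Δ₃` hold if and only if
`(d₀,d₁,d₂) × (r₀,r₁,r₂) = (−Δ₂, Δ₁Δ₂ − Δ₃, −Δ₁)`. -/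
theorem chi_conditions_iff_cross (Δ₁ Δ₂ Δ₃ : ℤ) (v₀ v₁ v₂ v₃ : ℤ × ℤ)
    (hv₃ : v₃ = v₀ - chi v₀ v₁ • v₁ + (chi v₀ v₁ * chi v₁ v₂ - chi v₀ v₂) • v₂) :
    (chi v₀ v₁ = Δ₁ ∧ chi v₁ v₂ = Δ₂ ∧ chi v₂ v₃ = Δ₃) ↔
      cross3 ![v₀.1, v₁.1, v₂.1] ![v₀.2, v₁.2, v₂.2] = ![-Δ₂, Δ₁ * Δ₂ - Δ₃, -Δ₁] := by
  subst hv₃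
  simp only [chi, cross3, funext_iff, Fin.forall_fin_succ, Fin.forall_fin_zero_pi,
    Matrix.cons_val_zero, Matrix.cons_val_one, Matrix.head_cons, Prod.fst_add, Prod.snd_add,
    Prod.fst_sub, Prod.snd_sub, Prod.smul_fst, Prod.smul_snd, smul_eq_mul,
    Matrix.cons_val_succ, Fin.succ_zero_eq_one, Matrix.cons_val_two, Matrix.tail_cons]
  constructor
  · rintro ⟨h1, h2, h3⟩
    subst h1 h2 h3
    refine ⟨by ring, by ring, by ring, fun _ => trivial⟩
  · rintro ⟨h1, h2, h3, -⟩
    refine ⟨by linarith, by linarith,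
      by linear_combination (-(v₂.1 * v₁.2 - v₁.1 * v₂.2)) * h3 - Δ₁ * h1 - h2⟩
end

section
/- Let v : ℤ → ℤ × ℤ satisfy the three-helical recursion and suppose χ(v(i), v(j)) > 0 whenever i < j. Set Δᵢ := χ(v(i−1), v(i)). Then either (i) Δ₁² + Δ₂² + Δ₃² = Δ₁Δ₂Δ₃ and there exists a constant C > 0 such that χ(v(i), v(j)) ≤ C·(1 + (j−i)²) for all i < j (polynomial growth), or (ii) there exist j ∈ {0,1,2}, a real number c > 1 and N ∈ ℕ such that χ(v(j), v(j+3n)) ≥ cⁿ for all n ≥ N (exponential growth). -/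
@[simp] lemma chi_self (u : ℤ × ℤ) : chi u u = 0 := by
  unfold chi; ring

lemma chi_swap (u w : ℤ × ℤ) : chi w u = -chi u w := by
  unfold chi; ring

@[simp] lemma chi_add_right (u x y : ℤ × ℤ) : chi u (x + y) = chi u x + chi u y := by
  simp only [chi, Prod.fst_add, Prod.snd_add]; ring

@[simp] lemma chi_sub_right (u x y : ℤ × ℤ) : chi u (x - y) = chi u x - chi u y := by
  simp only [chi, Prod.fst_sub, Prod.snd_sub]; ring

@[simp] lemma chi_smul_right (u x : ℤ × ℤ) (k : ℤ) : chi u (k • x) = k * chi u x := by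
  simp only [chi, Prod.smul_fst, Prod.smul_snd, smul_eq_mul]; ring

lemma chi_smul_eq_add (u w x : ℤ × ℤ) : chi u w • x = chi x w • u + chi u x • w := by
  ext <;> simp only [chi, Prod.smul_fst, Prod.smul_snd, Prod.fst_add, Prod.snd_add,
    smul_eq_mul] <;> ring

lemma eq_of_linear_recurrence {R : Type*} [Ring R] {x y α β : ℤ → R}
    (hx : ∀ j, x (j + 3) = x j + α j * x (j + 1) + β j * x (j + 2))
    (hy : ∀ j, y (j + 3) = y j + α j * y (j + 1) + β j * y (j + 2))
    (i : ℤ) (h₀ : x i = y i) (h₁ : x (i + 1) = y (i + 1)) (h₂ : x (i + 2) = y (i + 2)) :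
    x = y := by
  set d := x - y
  have hd : ∀ j, d (j + 3) = d j + α j * d (j + 1) + β j * d (j + 2) := fun j => by
    simp only [d, Pi.sub_apply, hx, hy]; noncomm_ring
  suffices key : ∀ j, d j = 0 ∧ d (j + 1) = 0 ∧ d (j + 2) = 0 from
    funext fun j => sub_eq_zero.mp (key j).1
  intro j
  induction j using Int.inductionOn' (b := i) with
  | zero => simp [d, h₀, h₁, h₂]
  | succ k _ ih =>
    obtain ⟨d₀, d₁, d₂⟩ := ih
    refine ⟨d₁, by rwa [add_assoc, one_add_one_eq_two], ?_⟩
    rw [add_assoc, show (1 + 2 : ℤ) = 3 by norm_num, hd, d₀, d₁, d₂]; simp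
  | pred k _ ih =>
    obtain ⟨d₀, d₁, d₂⟩ := ih
    have := hd (k - 1)
    rw [sub_add_cancel, show k - 1 + 3 = k + 2 by ring, show k - 1 + 2 = k + 1 by ring,
      d₀, d₁, d₂] at this
    refine ⟨by simpa using this.symm, by rwa [sub_add_cancel], ?_⟩
    rwa [show k - 1 + 2 = k + 1 by ring]

lemma eq_add_mul_of_recurrence_two {R : Type*} [CommRing R] {p : ℕ → R}
    (hp : ∀ n, p (n + 2) = 2 * p (n + 1) - p n) (n : ℕ) : p n = p 0 + n * (p 1 - p 0) := by
  induction n using Nat.twoStepInduction with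
  | zero => simp
  | one => simp
  | more n ih₀ ih₁ => rw [hp, ih₀, ih₁]; push_cast; ring

lemma two_le_of_recurrence_of_pos {p : ℕ → ℤ} {K : ℤ}
    (hp : ∀ n, p (n + 2) = K * p (n + 1) - p n) (h₀ : p 0 = 0) (h₁ : 0 < p 1) (h₂ : 0 < p 2)
    (h₃ : 0 < p 3) : 2 ≤ K := by
  have e₂ := hp 0
  have e₃ := hp 1
  rw [h₀, sub_zero] at e₂
  have hK : 0 < K := by nlinarith
  by_contra! hK₂
  obtain rfl : K = 1 := by omega
  linarith

lemma two_pow_le_of_recurrence {R : Type*} [CommRing R] [LinearOrder R] [IsStrictOrderedRing R]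
    {p : ℕ → R} {K : R} (hK : 3 ≤ K) (hp : ∀ n, p (n + 2) = K * p (n + 1) - p n)
    (h₀ : p 0 = 0) (h₁ : 1 ≤ p 1) (n : ℕ) : 2 ^ n ≤ p (n + 1) := by
  suffices ∀ n, 2 ^ n ≤ p (n + 1) ∧ p n ≤ p (n + 1) from (this n).1
  intro n
  induction n with
  | zero => exact ⟨by simpa using h₁, by linarith⟩
  | succ n ih =>
    have hpos : 0 ≤ p (n + 1) := (pow_nonneg zero_le_two n).trans ih.1
    have hKp : 3 * p (n + 1) ≤ K * p (n + 1) := mul_le_mul_of_nonneg_right hK hpos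
    rw [hp, pow_succ]
    constructor <;> linarith [ih.1, ih.2]

lemma sqrt_two_pow_succ_le_two_pow {m : ℕ} (hm : 1 ≤ m) : √2 ^ (m + 1) ≤ 2 ^ m :=
  calc √2 ^ (m + 1) ≤ √2 ^ (2 * m) :=
        pow_le_pow_right₀ Real.one_lt_sqrt_two.le (by omega)
    _ = 2 ^ m := by rw [pow_mul, Real.sq_sqrt zero_le_two]

/-- `delta v i = χ(v i, v (i+1))` is the paper's `Δ_{i+1}`. -/
def delta (v : ℤ → ℤ × ℤ) (i : ℤ) : ℤ := chi (v i) (v (i + 1))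

/-- Trace of the monodromy `v m ↦ v (m + 3)` of the helix, see `ThreeHelical.apply_add_six`. -/
def helixTrace (v : ℤ → ℤ × ℤ) : ℤ :=
  delta v 0 * delta v 1 * delta v 2 - (delta v 0 ^ 2 + delta v 1 ^ 2 + delta v 2 ^ 2) + 2

namespace ThreeHelical

variable {v : ℤ → ℤ × ℤ} (hv : ThreeHelical v)
include hv

lemma delta_add_two (i : ℤ) :
    delta v (i + 2) = delta v i * delta v (i + 1) - chi (v i) (v (i + 2)) := by
  have := congrArg (chi (v (i + 2))) (hv i)
  simp only [chi_add_right, chi_sub_right, chi_smul_right, chi_self] at this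
  simp only [delta, add_assoc, Int.reduceAdd]
  linear_combination this + chi_swap (v i) (v (i + 2)) -
    chi (v i) (v (i + 1)) * chi_swap (v (i + 1)) (v (i + 2))

lemma apply_add_three (i : ℤ) :
    v (i + 3) = v i - delta v i • v (i + 1) + delta v (i + 2) • v (i + 2) := by
  rw [hv.delta_add_two, hv i, delta, delta, add_assoc, one_add_one_eq_two]

lemma chi_apply_add_three (w : ℤ × ℤ) (i : ℤ) :
    chi w (v (i + 3)) =
      chi w (v i) - delta v i * chi w (v (i + 1)) + delta v (i + 2) * chi w (v (i + 2)) := by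
  rw [hv.apply_add_three]; simp only [chi_add_right, chi_sub_right, chi_smul_right]

lemma delta_periodic : Function.Periodic (delta v) 3 := fun i => by
  have h₁ := hv.chi_apply_add_three (v (i + 1)) i
  have h₂ := hv.delta_add_two (i + 1)
  simp only [delta, chi_self, add_assoc, Int.reduceAdd] at h₁ h₂ ⊢
  linear_combination h₂ - h₁ - chi_swap (v i) (v (i + 1))

/-- Both sides solve the same third-order recurrence in `j` and agree at `j = i - 1, i, i + 1`. -/
lemma chi_add_three (i j : ℤ) : chi (v (i + 3)) (v (j + 3)) = chi (v i) (v j) := by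
  have hy : ∀ k, chi (v i) (v (k + 3)) = chi (v i) (v k) + -delta v k * chi (v i) (v (k + 1)) +
      delta v (k + 2) * chi (v i) (v (k + 2)) := fun k => by
    rw [hv.chi_apply_add_three]; ring
  have hx : ∀ k, chi (v (i + 3)) (v (k + 3 + 3)) = chi (v (i + 3)) (v (k + 3)) +
      -delta v k * chi (v (i + 3)) (v (k + 1 + 3)) +
      delta v (k + 2) * chi (v (i + 3)) (v (k + 2 + 3)) := fun k => by
    rw [hv.chi_apply_add_three, add_right_comm k 3 1, add_right_comm k 3 2,
      hv.delta_periodic k, hv.delta_periodic (k + 2)]; ring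
  have h₀ : chi (v (i + 3)) (v (i - 1 + 3)) = chi (v i) (v (i - 1)) := by
    have := hv.delta_periodic (i - 1)
    rw [delta, delta, sub_add_cancel, show i - 1 + 3 + 1 = i + 3 by ring] at this
    rw [chi_swap, chi_swap (v (i - 1)), this]
  have h₂ : chi (v (i + 3)) (v (i - 1 + 2 + 3)) = chi (v i) (v (i - 1 + 2)) := by
    rw [show i - 1 + 2 = i + 1 by ring, add_right_comm]
    exact hv.delta_periodic i
  have key := eq_of_linear_recurrence (x := fun k => chi (v (i + 3)) (v (k + 3)))
    (y := fun k => chi (v i) (v k)) hx hy (i - 1) h₀ (by simp) h₂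
  exact congrFun key j

lemma helixTrace_eq (m : ℤ) :
    delta v m * delta v (m + 1) * delta v (m + 2) -
      (delta v m ^ 2 + delta v (m + 1) ^ 2 + delta v (m + 2) ^ 2) + 2 = helixTrace v := by
  set f : ℤ → ℤ := fun m => delta v m * delta v (m + 1) * delta v (m + 2) -
      (delta v m ^ 2 + delta v (m + 1) ^ 2 + delta v (m + 2) ^ 2) + 2
  have hf : Function.Periodic f 1 := fun m => by
    simp only [f, add_assoc, Int.reduceAdd, hv.delta_periodic m]; ring
  simpa [f, helixTrace] using hf.int_mul_eq m

lemma apply_add_six (m : ℤ) : v (m + 6) + v m = helixTrace v • v (m + 3) := by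
  have e₃ := hv.apply_add_three m
  have e₄ := hv.apply_add_three (m + 1)
  have e₅ := hv.apply_add_three (m + 2)
  have e₆ := hv.apply_add_three (m + 3)
  have p₃ := hv.delta_periodic m
  have p₄ := hv.delta_periodic (m + 1)
  have p₅ := hv.delta_periodic (m + 2)
  simp only [add_assoc, Int.reduceAdd] at e₄ e₅ e₆ p₄ p₅
  rw [p₃] at e₄ e₆
  rw [p₄] at e₅
  rw [p₅] at e₆
  have cramer : delta v m • v (m + 2) = (-delta v (m + 1)) • v m +
      (delta v m * delta v (m + 1) - delta v (m + 2)) • v (m + 1) := by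
    have := chi_smul_eq_add (v m) (v (m + 1)) (v (m + 2))
    rw [chi_swap (v (m + 1)) (v (m + 2)), (by linarith [hv.delta_add_two m] :
      chi (v m) (v (m + 2)) = delta v m * delta v (m + 1) - delta v (m + 2)),
      show chi (v (m + 1)) (v (m + 2)) = delta v (m + 1) by
        rw [delta, add_assoc, one_add_one_eq_two]] at this
    exact this
  rw [← hv.helixTrace_eq m]
  -- Substituting the recursion leaves `delta v (m + 1)` times the Cramer relation among
  -- `v m`, `v (m + 1)`, `v (m + 2)`.
  linear_combination (norm := module) e₆ + delta v (m + 2) • e₅ +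
    (delta v (m + 1) * delta v (m + 2) - delta v m) • e₄ + (delta v (m + 1) ^ 2 - 1) • e₃ +
    delta v (m + 1) • cramer

lemma chi_apply_add_eq_emod (i k : ℤ) :
    chi (v i) (v (i + k)) = chi (v (i % 3)) (v (i % 3 + k)) := by
  have hf : Function.Periodic (fun i => chi (v i) (v (i + k))) 3 := fun i => by
    simp only [add_right_comm i 3 k, hv.chi_add_three]
  have := hf.sub_int_mul_eq (i / 3) (x := i)
  rwa [Int.cast_id, show i - i / 3 * 3 = i % 3 by omega, eq_comm] at this

lemma chi_apply_add_three_mul_add_two (i s : ℤ) (n : ℕ) :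
    chi (v i) (v (s + 3 * ((n + 2 : ℕ) : ℤ))) =
      helixTrace v * chi (v i) (v (s + 3 * ((n + 1 : ℕ) : ℤ))) - chi (v i) (v (s + 3 * n)) := by
  have := congrArg (chi (v i)) (hv.apply_add_six (s + 3 * n))
  simp only [chi_add_right, chi_smul_right] at this
  push_cast
  rw [show s + 3 * (n + 2 : ℤ) = s + 3 * n + 6 by ring,
    show s + 3 * (n + 1 : ℤ) = s + 3 * n + 3 by ring]
  linarith

variable (hpos : ∀ i j : ℤ, i < j → 0 < chi (v i) (v j))
include hpos

lemma two_le_helixTrace : 2 ≤ helixTrace v :=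
  two_le_of_recurrence_of_pos (p := fun n : ℕ => chi (v 0) (v (0 + 3 * n)))
    (hv.chi_apply_add_three_mul_add_two 0 0) (by simp) (hpos _ _ (by norm_num))
    (hpos _ _ (by norm_num)) (hpos _ _ (by norm_num))

lemma exists_chi_le_of_helixTrace_eq_two (hK : helixTrace v = 2) :
    ∃ C : ℤ, 0 < C ∧ ∀ i j : ℤ, i < j → chi (v i) (v j) ≤ C * (1 + (j - i) ^ 2) := by
  set B := ∑ q ∈ Finset.Ico (0 : ℤ) 3 ×ˢ Finset.Icc (1 : ℤ) 6, chi (v q.1) (v (q.1 + q.2))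
  have hB : ∀ i k, 1 ≤ k → k ≤ 6 → chi (v i) (v (i + k)) ≤ B := fun i k hk₁ hk₆ => by
    rw [hv.chi_apply_add_eq_emod]
    refine Finset.single_le_sum (f := fun q : ℤ × ℤ => chi (v q.1) (v (q.1 + q.2)))
      (a := (i % 3, k)) (fun q hq => (hpos _ _ ?_).le) ?_
    · simp only [Finset.mem_product, Finset.mem_Ico, Finset.mem_Icc] at hq; omega
    · simp only [Finset.mem_product, Finset.mem_Ico, Finset.mem_Icc]; omega
  refine ⟨B, (hpos 0 (0 + 1) (by norm_num)).trans_le (hB 0 1 le_rfl (by norm_num)), ?_⟩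
  intro i j hij
  obtain ⟨n, r, hr₁, hr₃, rfl⟩ : ∃ (n : ℕ) (r : ℤ), 1 ≤ r ∧ r ≤ 3 ∧ j = i + r + 3 * n :=
    ⟨((j - i - 1) / 3).toNat, j - i - 3 * ((j - i - 1) / 3).toNat, by omega, by omega,
      by ring⟩
  have hlin := eq_add_mul_of_recurrence_two (p := fun n : ℕ => chi (v i) (v (i + r + 3 * n)))
    (by simpa only [hK] using hv.chi_apply_add_three_mul_add_two i (i + r)) n
  have h₀ : 0 < chi (v i) (v (i + r)) := hpos _ _ (by omega)
  have hB₀ := hB i r hr₁ (by omega)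
  have hB₁ := hB i (r + 3) (by omega) (by omega)
  simp only [Nat.cast_zero, Nat.cast_one, mul_zero, add_zero, mul_one] at hlin
  rw [← add_assoc] at hB₁
  have hn : (n : ℤ) ≤ (i + r + 3 * n - i) ^ 2 := by nlinarith
  nlinarith

lemma two_pow_le_chi_of_three_le_helixTrace (hK : 3 ≤ helixTrace v) (n : ℕ) :
    2 ^ n ≤ chi (v 0) (v (0 + 3 * ((n + 1 : ℕ) : ℤ))) :=
  two_pow_le_of_recurrence (p := fun n : ℕ => chi (v 0) (v (0 + 3 * n))) hK
    (hv.chi_apply_add_three_mul_add_two 0 0) (by simp) (hpos _ _ (by norm_num)) n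

end ThreeHelical

/-- Growth dichotomy: for a three-helical sequence with `χ(v(i),v(j)) > 0` for `i < j`,
with `Δᵢ := χ(v(i−1),v(i))`, either we are in the Markov case
`Δ₁² + Δ₂² + Δ₃² = Δ₁Δ₂Δ₃` and the growth is polynomial (quadratically bounded), or
there is exponential growth along some residue `j ∈ {0,1,2}`. -/
theorem growth_dichotomy (v : ℤ → ℤ × ℤ) (h : ThreeHelical v)
    (hpos : ∀ i j : ℤ, i < j → 0 < chi (v i) (v j)) :
    ((chi (v 0) (v 1)) ^ 2 + (chi (v 1) (v 2)) ^ 2 + (chi (v 2) (v 3)) ^ 2 =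
        chi (v 0) (v 1) * chi (v 1) (v 2) * chi (v 2) (v 3) ∧
      ∃ C : ℝ, 0 < C ∧ ∀ i j : ℤ, i < j →
        ((chi (v i) (v j) : ℤ) : ℝ) ≤ C * (1 + ((j - i : ℤ) : ℝ) ^ 2)) ∨
    (∃ j ∈ ({0, 1, 2} : Set ℤ), ∃ c : ℝ, 1 < c ∧ ∃ N : ℕ, ∀ n : ℕ, N ≤ n →
      c ^ n ≤ ((chi (v j) (v (j + 3 * (n : ℤ))) : ℤ) : ℝ)) := by
  have hK : helixTrace v = chi (v 0) (v 1) * chi (v 1) (v 2) * chi (v 2) (v 3) -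
      (chi (v 0) (v 1) ^ 2 + chi (v 1) (v 2) ^ 2 + chi (v 2) (v 3) ^ 2) + 2 := rfl
  rcases (h.two_le_helixTrace hpos).eq_or_lt with hK₂ | hK₃
  · obtain ⟨C, hC, hbound⟩ := h.exists_chi_le_of_helixTrace_eq_two hpos hK₂.symm
    refine Or.inl ⟨by linarith, C, by exact_mod_cast hC, fun i j hij => ?_⟩
    exact_mod_cast hbound i j hij
  · refine Or.inr ⟨0, by simp, √2, Real.one_lt_sqrt_two, 2, fun n hn => ?_⟩
    obtain ⟨m, rfl⟩ : ∃ m, n = m + 1 := ⟨n - 1, by omega⟩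
    calc √2 ^ (m + 1) ≤ 2 ^ m := sqrt_two_pow_succ_le_two_pow (by omega)
      _ ≤ _ := by exact_mod_cast h.two_pow_le_chi_of_three_le_helixTrace hpos hK₃ m
end

section
/- Let Δ : ℤ → ℤ be 3-periodic, let P be a formal power series over ℤ, and let H : ℤ → ℤ[[t]] be a family of formal power series satisfying, for every n ∈ ℤ, H_n − Δ(−n)·t·H_{n+1} + Δ(−n−2)·t²·H_{n+2} − t³·H_{n+3} = P. Then H_{n+3} = H_n for all n ∈ ℤ. (Taking P = 1 − t³ gives the 3-periodicity of the relative Hilbert series of End(𝓔) of an elliptic helix, and taking P = 1 gives that of its quadratic cover 𝕊ⁿᶜ(𝓔).) -/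
open PowerSeries

/-!
The differences `G n = H (n + 3) - H n` satisfy the homogeneous version of the recurrence,
because the coefficients `Δ (-n)` and `Δ (-n - 2)` are unchanged by `n ↦ n + 3`. Solved for
`G n`, that recurrence reads `G n = X * (…)` with `(…)` in the ideal generated by all the `G m`;
so this ideal is contained in `(X) ^ k` for every `k`, and hence is zero.
-/

namespace PowerSeries

theorem eq_zero_of_forall_eq_X_mul_mem_span {R ι : Type*} [CommSemiring R] (G : ι → R⟦X⟧)
    (hG : ∀ i, ∃ f ∈ Ideal.span (Set.range G), G i = X * f) (i : ι) : G i = 0 := by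
  have hspan : ∀ k : ℕ, Ideal.span (Set.range G) ≤ Ideal.span {X ^ k} := by
    intro k
    induction k with
    | zero => simp
    | succ k ih =>
      rw [Ideal.span_le]
      rintro _ ⟨j, rfl⟩
      obtain ⟨f, hf, hGj⟩ := hG j
      rw [SetLike.mem_coe, Ideal.mem_span_singleton, hGj, pow_succ']
      exact mul_dvd_mul_left X (Ideal.mem_span_singleton.mp (ih hf))
  ext m
  have hdvd : X ^ (m + 1) ∣ G i :=
    Ideal.mem_span_singleton.mp (hspan (m + 1) (Ideal.subset_span ⟨i, rfl⟩))
  simpa using X_pow_dvd_iff.mp hdvd m (Nat.lt_succ_self m)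

end PowerSeries

/-- If `Δ : ℤ → ℤ` is 3-periodic, `P ∈ ℤ[[t]]`, and the family `H : ℤ → ℤ[[t]]`
satisfies `H_n − Δ(−n)·t·H_{n+1} + Δ(−n−2)·t²·H_{n+2} − t³·H_{n+3} = P` for all `n`,
then `H_{n+3} = H_n` for all `n`. -/
theorem hilbert_series_three_periodic (Δ : ℤ → ℤ) (hper : ∀ n : ℤ, Δ (n + 3) = Δ n)
    (P : PowerSeries ℤ) (H : ℤ → PowerSeries ℤ)
    (hrec : ∀ n : ℤ,
      H n - C (Δ (-n)) * X * H (n + 1) + C (Δ (-n - 2)) * X ^ 2 * H (n + 2)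
        - X ^ 3 * H (n + 3) = P) :
    ∀ n : ℤ, H (n + 3) = H n := by
  have hΔ : Function.Periodic Δ 3 := hper
  set G : ℤ → PowerSeries ℤ := fun n => H (n + 3) - H n with hGdef
  have hG : ∀ n, G n = X * (C (Δ (-n)) * G (n + 1) - C (Δ (-n - 2)) * X * G (n + 2)
      + X ^ 2 * G (n + 3)) := by
    intro n
    have hshift := hrec (n + 3)
    rw [show -(n + 3) = -n - 3 by ring, hΔ.sub_eq, show -n - 3 - 2 = -n - 2 - 3 by ring,
      hΔ.sub_eq] at hshift
    simp only [hGdef, show n + 3 + 1 = n + 1 + 3 by ring, show n + 3 + 2 = n + 2 + 3 by ring]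
      at hshift ⊢
    linear_combination hshift - hrec n
  have hmem : ∀ n, C (Δ (-n)) * G (n + 1) - C (Δ (-n - 2)) * X * G (n + 2) + X ^ 2 * G (n + 3)
      ∈ Ideal.span (Set.range G) := fun n =>
    add_mem (sub_mem (Ideal.mul_mem_left _ _ (Ideal.subset_span ⟨_, rfl⟩))
      (Ideal.mul_mem_left _ _ (Ideal.subset_span ⟨_, rfl⟩)))
      (Ideal.mul_mem_left _ _ (Ideal.subset_span ⟨_, rfl⟩))
  intro n
  exact sub_eq_zero.mp (eq_zero_of_forall_eq_X_mul_mem_span G (fun m => ⟨_, hmem m, hG m⟩) n)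
end

section
/- Let Δ : ℤ → ℤ be 3-periodic with values Δ₁ := Δ(1), Δ₂ := Δ(2), Δ₃ := Δ(3), let P ∈ ℤ[[t]], and let H : ℤ → ℤ[[t]] satisfy, for every n ∈ ℤ, H_n − Δ(−n)·t·H_{n+1} + Δ(−n−2)·t²·H_{n+2} − t³·H_{n+3} = P. Let D be the 3×3 matrix over ℤ[[t]] with rows (1 − t³, −Δ₃·t, Δ₁·t²), (Δ₃·t², 1 − t³, −Δ₂·t), (−Δ₁·t, Δ₂·t², 1 − t³). Then D is a unit in the ring of 3×3 matrices over ℤ[[t]], and D *ᵥ (H₀, H₁, H₂) = (P, P, P); consequently (H₀, H₁, H₂) = D⁻¹ *ᵥ (P, P, P). -/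
open Matrix PowerSeries

/-!
Since `Δ` is 3-periodic, the differences `H n - H (n + 3)` satisfy the homogeneous version of
the recurrence, so each of them lies in `X` times the ideal they generate; iterating, each is
divisible by every power of `X` and hence vanishes. For the now 3-periodic `H`, the recurrence at
`n = 0, 1, 2` is exactly `D *ᵥ (H₀, H₁, H₂) = (P, P, P)`, and `D` is a unit because it reduces to
the identity modulo `X`.
-/

theorem Function.Periodic.map_emod {α : Type*} {f : ℤ → α} {c : ℤ} (hf : Function.Periodic f c)
    (n : ℤ) : f (n % c) = f n := by
  rw [Int.emod_def, mul_comm, ← smul_eq_mul, hf.sub_zsmul_eq]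

theorem Function.Periodic.eq_of_modEq {α : Type*} {f : ℤ → α} {c : ℤ}
    (hf : Function.Periodic f c) {m n : ℤ} (h : m ≡ n [ZMOD c]) : f m = f n := by
  rw [← hf.map_emod m, h, hf.map_emod]

namespace PowerSeries

variable {R : Type*} [CommRing R]

theorem eq_zero_of_forall_X_pow_dvd {φ : R⟦X⟧} (h : ∀ n, X ^ n ∣ φ) : φ = 0 :=
  ext fun n => X_pow_dvd_iff.mp (h (n + 1)) n n.lt_succ_self

theorem ideal_eq_bot_of_le_span_X_mul {I : Ideal R⟦X⟧} (h : I ≤ Ideal.span {X} * I) : I = ⊥ := by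
  have hdvd : ∀ n, ∀ φ ∈ I, X ^ n ∣ φ := by
    intro n
    induction n with
    | zero => simp
    | succ n ih =>
      intro φ hφ
      obtain ⟨ψ, hψ, rfl⟩ := Ideal.mem_span_singleton_mul.mp (h hφ)
      rw [pow_succ']
      exact mul_dvd_mul_left X (ih ψ hψ)
  exact (Submodule.eq_bot_iff I).mpr fun φ hφ => eq_zero_of_forall_X_pow_dvd fun n => hdvd n φ hφ

theorem eq_zero_of_recurrence {a b : ℤ → R⟦X⟧} {G : ℤ → R⟦X⟧}
    (hG : ∀ n, G n = a n * X * G (n + 1) - b n * X ^ 2 * G (n + 2) + X ^ 3 * G (n + 3)) :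
    G = 0 := by
  set I := Ideal.span (Set.range G)
  have hmem : ∀ n, G n ∈ I := fun n => Ideal.subset_span ⟨n, rfl⟩
  have hI : I ≤ Ideal.span {X} * I := by
    refine Ideal.span_le.mpr ?_
    rintro _ ⟨n, rfl⟩
    rw [hG n, show a n * X * G (n + 1) - b n * X ^ 2 * G (n + 2) + X ^ 3 * G (n + 3)
      = X * (a n * G (n + 1) - b n * X * G (n + 2) + X ^ 2 * G (n + 3)) by ring]
    exact Ideal.mul_mem_mul (Ideal.mem_span_singleton_self X) <|
      I.add_mem (I.sub_mem (I.mul_mem_left _ (hmem _)) (I.mul_mem_left _ (hmem _)))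
        (I.mul_mem_left _ (hmem _))
  funext n
  simpa [ideal_eq_bot_of_le_span_X_mul hI] using hmem n

theorem periodic_of_recurrence {a b : ℤ → R⟦X⟧} {m : ℤ} (ha : Function.Periodic a m)
    (hb : Function.Periodic b m) {P : R⟦X⟧} {H : ℤ → R⟦X⟧}
    (hrec : ∀ n, H n - a n * X * H (n + 1) + b n * X ^ 2 * H (n + 2) - X ^ 3 * H (n + 3) = P) :
    Function.Periodic H m := by
  have hshift : ∀ n k, H (n + k + m) = H (n + m + k) := fun n k => by rw [add_right_comm]
  have hG := eq_zero_of_recurrence (a := a) (b := b) (G := fun n => H n - H (n + m)) fun n => by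
    have := hrec (n + m)
    rw [ha n, hb n] at this
    simp only [hshift]
    linear_combination hrec n - this
  exact fun n => (sub_eq_zero.mp (congrFun hG n)).symm

theorem mulVec_eq_of_recurrence {a b : ℤ → R⟦X⟧} {P : R⟦X⟧} {H : ℤ → R⟦X⟧}
    (hH : Function.Periodic H 3)
    (hrec : ∀ n, H n - a n * X * H (n + 1) + b n * X ^ 2 * H (n + 2) - X ^ 3 * H (n + 3) = P) :
    !![1 - X ^ 3, -a 0 * X, b 0 * X ^ 2;
       b 1 * X ^ 2, 1 - X ^ 3, -a 1 * X;
       -a 2 * X, b 2 * X ^ 2, 1 - X ^ 3] *ᵥ ![H 0, H 1, H 2] = ![P, P, P] := by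
  have h0 := hrec 0
  have h1 := hrec 1
  have h2 := hrec 2
  have h3 : H 3 = H 0 := hH.eq_of_modEq rfl
  have h4 : H 4 = H 1 := hH.eq_of_modEq rfl
  have h5 : H 5 = H 2 := hH.eq_of_modEq rfl
  norm_num [h3, h4, h5] at h0 h1 h2
  funext i
  fin_cases i <;> simp [mulVec, dotProduct, Fin.sum_univ_three]
  · linear_combination h0
  · linear_combination h1
  · linear_combination h2

end PowerSeries

theorem Matrix.isUnit_of_isUnit_map_constantCoeff {R n : Type*} [CommRing R] [Fintype n]
    [DecidableEq n] {M : Matrix n n R⟦X⟧} (h : IsUnit (M.map constantCoeff)) : IsUnit M := by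
  rw [isUnit_iff_isUnit_det] at h ⊢
  rw [isUnit_iff_constantCoeff, RingHom.map_det]
  exact h

/-- If `Δ : ℤ → ℤ` is 3-periodic, `P ∈ ℤ[[t]]`, the family `H : ℤ → ℤ[[t]]` satisfies
`H_n − Δ(−n)·t·H_{n+1} + Δ(−n−2)·t²·H_{n+2} − t³·H_{n+3} = P` for all `n`, and `D` is
the 3×3 matrix over `ℤ[[t]]` with rows `(1 − t³, −Δ₃t, Δ₁t²)`, `(Δ₃t², 1 − t³, −Δ₂t)`,
`(−Δ₁t, Δ₂t², 1 − t³)`, then `D` is a unit, `D *ᵥ (H₀,H₁,H₂) = (P,P,P)` and hence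
`(H₀,H₁,H₂) = D⁻¹ *ᵥ (P,P,P)`. -/
theorem hilbert_series_formula (Δ : ℤ → ℤ) (hper : ∀ n : ℤ, Δ (n + 3) = Δ n)
    (P : PowerSeries ℤ) (H : ℤ → PowerSeries ℤ)
    (hrec : ∀ n : ℤ,
      H n - C (R := ℤ) (Δ (-n)) * X * H (n + 1) + C (R := ℤ) (Δ (-n - 2)) * X ^ 2 * H (n + 2)
        - X ^ 3 * H (n + 3) = P)
    (D : Matrix (Fin 3) (Fin 3) (PowerSeries ℤ))
    (hD : D = !![1 - X ^ 3, -(C (R := ℤ) (Δ 3)) * X, C (R := ℤ) (Δ 1) * X ^ 2;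
                 C (R := ℤ) (Δ 3) * X ^ 2, 1 - X ^ 3, -(C (R := ℤ) (Δ 2)) * X;
                 -(C (R := ℤ) (Δ 1)) * X, C (R := ℤ) (Δ 2) * X ^ 2, 1 - X ^ 3]) :
    IsUnit D ∧ D *ᵥ ![H 0, H 1, H 2] = ![P, P, P] ∧
      ![H 0, H 1, H 2] = D⁻¹ *ᵥ ![P, P, P] := by
  have hΔ : Function.Periodic Δ 3 := hper
  have hH : Function.Periodic H 3 :=
    periodic_of_recurrence (a := fun n => C (Δ (-n))) (b := fun n => C (Δ (-n - 2)))
      (fun n => by dsimp only; rw [neg_add', hΔ.sub_eq])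
      (fun n => by dsimp only; rw [neg_add', sub_right_comm, hΔ.sub_eq]) hrec
  have hmv : D *ᵥ ![H 0, H 1, H 2] = ![P, P, P] := by
    have h0 : Δ 0 = Δ 3 := hΔ.eq_of_modEq rfl
    have h1 : Δ (-2) = Δ 1 := hΔ.eq_of_modEq rfl
    have h2 : Δ (-1) = Δ 2 := hΔ.eq_of_modEq rfl
    have h3 : Δ (-3) = Δ 3 := hΔ.eq_of_modEq rfl
    have h4 : Δ (-4) = Δ 2 := hΔ.eq_of_modEq rfl
    simpa [hD, h0, h1, h2, h3, h4] using mulVec_eq_of_recurrence hH hrec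
  have hunit : IsUnit D := by
    have hD₀ : D.map constantCoeff = 1 := by
      rw [hD]; ext i j; fin_cases i <;> fin_cases j <;> simp
    exact isUnit_of_isUnit_map_constantCoeff (hD₀ ▸ isUnit_one)
  let := hunit.invertible
  exact ⟨hunit, hmv, (inv_mulVec_eq_vec hmv.symm).symm⟩
end

section
/- Let ρ = (ρ₀, ρ₁, ρ₂) be a Markov triple, s := ρ₁ − 3ρ₀ρ₂, and μ₁ := (ρ₀, s, ρ₂), μ₀ := (ρ₀ + 3sρ₂, s, ρ₂), μ₂ := (ρ₀, s, ρ₂ + 3sρ₀). Then, with the standard cross product convention, μ₀ × ρ = −3ρ₂²·μ₁ and μ₂ × ρ = 3ρ₀²·μ₁. -/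
/-- For a Markov triple `ρ = (ρ₀,ρ₁,ρ₂)`, with `s := ρ₁ − 3ρ₀ρ₂`,
`μ₁ := (ρ₀, s, ρ₂)`, `μ₀ := (ρ₀ + 3sρ₂, s, ρ₂)`, `μ₂ := (ρ₀, s, ρ₂ + 3sρ₀)`,
we have `μ₀ × ρ = −3ρ₂²·μ₁` and `μ₂ × ρ = 3ρ₀²·μ₁`. -/
theorem markov_mutation_cross (ρ₀ ρ₁ ρ₂ : ℤ)
    (h₀ : 0 < ρ₀) (h₁ : 0 < ρ₁) (h₂ : 0 < ρ₂)
    (hM : ρ₀ ^ 2 + ρ₁ ^ 2 + ρ₂ ^ 2 = 3 * ρ₀ * ρ₁ * ρ₂)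
    (s : ℤ) (hs : s = ρ₁ - 3 * ρ₀ * ρ₂) :
    cross3 ![ρ₀ + 3 * s * ρ₂, s, ρ₂] ![ρ₀, ρ₁, ρ₂] = (-3 * ρ₂ ^ 2) • ![ρ₀, s, ρ₂] ∧
    cross3 ![ρ₀, s, ρ₂ + 3 * s * ρ₀] ![ρ₀, ρ₁, ρ₂] = (3 * ρ₀ ^ 2) • ![ρ₀, s, ρ₂] := by
  subst hs
  constructor <;> funext i <;> fin_cases i <;>
    simp [cross3, Matrix.cons_val_zero, Matrix.cons_val_one] <;> nlinarith [hM]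
end

section
/- Let ρ = (ρ₀, ρ₁, ρ₂) be a Markov triple, s := ρ₁ − 3ρ₀ρ₂, μ₁ := (ρ₀, s, ρ₂), μ₀ := (ρ₀ + 3sρ₂, s, ρ₂), μ₂ := (ρ₀, s, ρ₂ + 3sρ₀), and let a, b ∈ ℤ satisfy a·ρ₀² + b·ρ₂² = 1. Then d := b·μ₀ − a·μ₂ satisfies d × ρ = −3·μ₁ and gcd(dᵢ, ρᵢ) = 1 for each i ∈ {0,1,2}; moreover every d' ∈ ℤ³ with d' × ρ = −3·μ₁ equals d + k·ρ for some k ∈ ℤ. -/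
/-!
`a ρ₀² + b ρ₂² = 1` makes `ρ₀, ρ₂` coprime; the Markov equation then makes `ρ` pairwise coprime
and prime to `3`, because modulo `3` a sum of two squares vanishes only if both squares do.
The cross-product identity holds modulo the two equations, and its first and last components give
`d₀ρ₁ ≡ −3ρ₂ (mod ρ₀)`, `d₁ρ₀ ≡ 3ρ₂ (mod ρ₁)`, `d₂ρ₁ ≡ 3ρ₀ (mod ρ₂)`, so each `dᵢ` is prime to `ρᵢ`.
Two solutions differ by some `e` with `e × ρ = 0`, and if `uρ₀ + vρ₂ = 1` such an `e` is
`(ue₀ + ve₂)ρ`.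
-/

lemma cross3_sub_left (a b c : Fin 3 → ℤ) : cross3 (a - b) c = cross3 a c - cross3 b c := by
  funext i
  fin_cases i <;>
    simp only [cross3, Fin.zero_eta, Fin.mk_one, Fin.reduceFinMk, Pi.sub_apply,
      Matrix.cons_val_zero, Matrix.cons_val_one, Matrix.cons_val] <;> ring

lemma eq_smul_of_cross3_eq_zero {e v : Fin 3 → ℤ} (hv : IsCoprime (v 0) (v 2))
    (h : cross3 e v = 0) : ∃ k : ℤ, e = k • v := by
  obtain ⟨u, w, huw⟩ := hv
  have h0 : e 1 * v 2 - e 2 * v 1 = 0 := by simpa [cross3] using congrFun h 0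
  have h1 : e 2 * v 0 - e 0 * v 2 = 0 := by simpa [cross3] using congrFun h 1
  have h2 : e 0 * v 1 - e 1 * v 0 = 0 := by simpa [cross3] using congrFun h 2
  refine ⟨u * e 0 + w * e 2, funext fun i => ?_⟩
  fin_cases i <;> simp only [Fin.zero_eta, Fin.mk_one, Fin.reduceFinMk, Pi.smul_apply, smul_eq_mul]
  · linear_combination -e 0 * huw - w * h1
  · linear_combination -e 1 * huw - u * h2 + w * h0
  · linear_combination -e 2 * huw + u * h1

lemma isCoprime_of_dvd_mul_sub {R : Type*} [CommRing R] {x y c m : R} (hc : IsCoprime c m)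
    (h : m ∣ x * y - c) : IsCoprime x m := by
  obtain ⟨t, ht⟩ := h
  have hxy : IsCoprime (x * y) m := by
    rw [show x * y = c + m * t by linear_combination ht]
    exact hc.add_mul_left_left t
  exact hxy.of_mul_left_left

lemma Int.three_dvd_of_three_dvd_sq_add_sq {y z : ℤ} (h : 3 ∣ y ^ 2 + z ^ 2) :
    3 ∣ y ∧ 3 ∣ z := by
  have hcast (a : ℤ) : 3 ∣ a ↔ (a : ZMod 3) = 0 := by
    rw [ZMod.intCast_zmod_eq_zero_iff_dvd, Nat.cast_ofNat]
  rw [hcast, Int.cast_add, Int.cast_pow, Int.cast_pow] at h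
  rw [hcast, hcast]
  generalize (y : ZMod 3) = v at h ⊢
  generalize (z : ZMod 3) = w at h ⊢
  revert v w
  decide

section Markov

variable {x y z : ℤ}

lemma three_dvd_of_markov (hM : x ^ 2 + y ^ 2 + z ^ 2 = 3 * x * y * z) (hx : 3 ∣ x) :
    3 ∣ y ∧ 3 ∣ z := by
  refine Int.three_dvd_of_three_dvd_sq_add_sq ?_
  rw [show y ^ 2 + z ^ 2 = 3 * x * y * z - x ^ 2 by linear_combination hM]
  exact dvd_sub (dvd_mul_of_dvd_left (dvd_mul_of_dvd_left (dvd_mul_right 3 x) y) z)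
    (dvd_pow hx two_ne_zero)

lemma isCoprime_three_of_markov (hM : x ^ 2 + y ^ 2 + z ^ 2 = 3 * x * y * z)
    (hxz : IsCoprime x z) : IsCoprime 3 x ∧ IsCoprime 3 y ∧ IsCoprime 3 z := by
  have not_dvd_both : ¬(3 ∣ x ∧ 3 ∣ z) := fun ⟨hx, hz⟩ =>
    Int.prime_three.not_isUnit (hxz.isUnit_of_dvd' hx hz)
  simp only [Int.prime_three.coprime_iff_not_dvd]
  refine ⟨fun hx => not_dvd_both ⟨hx, (three_dvd_of_markov hM hx).2⟩,
    fun hy => not_dvd_both (three_dvd_of_markov (by linear_combination hM) hy),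
    fun hz => not_dvd_both
      ⟨(three_dvd_of_markov (y := y) (z := x) (by linear_combination hM) hz).2, hz⟩⟩

lemma isCoprime_of_markov (hM : x ^ 2 + y ^ 2 + z ^ 2 = 3 * x * y * z) (hxz : IsCoprime x z) :
    IsCoprime x y := by
  have h : IsCoprime x (y * (3 * x * z - y) + x * -x) := by
    rw [show y * (3 * x * z - y) + x * -x = z ^ 2 by linear_combination -hM]
    exact hxz.pow_right
  exact h.of_add_mul_left_right.of_mul_right_left

lemma isCoprime_apply_of_cross3_eq {s : ℤ} (hM : x ^ 2 + y ^ 2 + z ^ 2 = 3 * x * y * z)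
    (hxz : IsCoprime x z) {d : Fin 3 → ℤ} (hd : cross3 d ![x, y, z] = (-3 : ℤ) • ![x, s, z]) :
    IsCoprime (d 0) x ∧ IsCoprime (d 1) y ∧ IsCoprime (d 2) z := by
  have e0 : d 1 * z - d 2 * y = -3 * x := by simpa [cross3] using congrFun hd 0
  have e2 : d 0 * y - d 1 * x = -3 * z := by simpa [cross3] using congrFun hd 2
  obtain ⟨h3x, h3y, h3z⟩ := isCoprime_three_of_markov hM hxz
  have hzy : IsCoprime z y := isCoprime_of_markov (by linear_combination hM) hxz.symm
  refine ⟨isCoprime_of_dvd_mul_sub (y := y) ((h3x.mul_left hxz.symm).neg_left) ⟨d 1, ?_⟩,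
    isCoprime_of_dvd_mul_sub (y := x) (h3y.mul_left hzy) ⟨d 0, ?_⟩,
    isCoprime_of_dvd_mul_sub (y := y) (h3z.mul_left hxz) ⟨d 1, ?_⟩⟩
  · linear_combination e2
  · linear_combination -e2
  · linear_combination -e0

lemma cross3_markov_degree {s a b : ℤ} (hM : x ^ 2 + y ^ 2 + z ^ 2 = 3 * x * y * z)
    (hs : s = y - 3 * x * z) (hab : a * x ^ 2 + b * z ^ 2 = 1) :
    cross3 (b • ![x + 3 * s * z, s, z] - a • ![x, s, z + 3 * s * x]) ![x, y, z] =
      (-3 : ℤ) • ![x, s, z] := by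
  subst hs
  funext i
  fin_cases i <;>
    simp only [cross3, Fin.zero_eta, Fin.mk_one, Fin.reduceFinMk, Pi.sub_apply, Pi.smul_apply,
      smul_eq_mul, Matrix.cons_val_zero, Matrix.cons_val_one, Matrix.cons_val]
  · linear_combination 3 * a * x * hM - 3 * x * hab
  · linear_combination (-3 * (y - 3 * x * z)) * hab
  · linear_combination 3 * b * z * hM - 3 * z * hab

end Markov

theorem markov_degree_exists_general (ρ₀ ρ₁ ρ₂ : ℤ)
    (hM : ρ₀ ^ 2 + ρ₁ ^ 2 + ρ₂ ^ 2 = 3 * ρ₀ * ρ₁ * ρ₂)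
    (s : ℤ) (hs : s = ρ₁ - 3 * ρ₀ * ρ₂)
    (a b : ℤ) (hab : a * ρ₀ ^ 2 + b * ρ₂ ^ 2 = 1)
    (d : Fin 3 → ℤ)
    (hd : d = b • ![ρ₀ + 3 * s * ρ₂, s, ρ₂] - a • ![ρ₀, s, ρ₂ + 3 * s * ρ₀]) :
    cross3 d ![ρ₀, ρ₁, ρ₂] = (-3 : ℤ) • ![ρ₀, s, ρ₂] ∧
    (Int.gcd (d 0) ρ₀ = 1 ∧ Int.gcd (d 1) ρ₁ = 1 ∧ Int.gcd (d 2) ρ₂ = 1) ∧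
    ∀ d' : Fin 3 → ℤ, cross3 d' ![ρ₀, ρ₁, ρ₂] = (-3 : ℤ) • ![ρ₀, s, ρ₂] →
      ∃ k : ℤ, d' = d + k • ![ρ₀, ρ₁, ρ₂] := by
  have hcop : IsCoprime ρ₀ ρ₂ := ⟨a * ρ₀, b * ρ₂, by linear_combination hab⟩
  have hcross : cross3 d ![ρ₀, ρ₁, ρ₂] = (-3 : ℤ) • ![ρ₀, s, ρ₂] :=
    hd ▸ cross3_markov_degree hM hs hab
  obtain ⟨g₀, g₁, g₂⟩ := isCoprime_apply_of_cross3_eq hM hcop hcross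
  refine ⟨hcross, ⟨Int.isCoprime_iff_gcd_eq_one.mp g₀, Int.isCoprime_iff_gcd_eq_one.mp g₁,
    Int.isCoprime_iff_gcd_eq_one.mp g₂⟩, fun d' hd' => ?_⟩
  obtain ⟨k, hk⟩ := eq_smul_of_cross3_eq_zero (e := d' - d) hcop
    (by rw [cross3_sub_left, hd', hcross, sub_self])
  exact ⟨k, by rw [← hk, add_sub_cancel]⟩

/-- For a Markov triple `ρ`, with `s := ρ₁ − 3ρ₀ρ₂`, `μ₁ := (ρ₀, s, ρ₂)`,
`μ₀ := (ρ₀ + 3sρ₂, s, ρ₂)`, `μ₂ := (ρ₀, s, ρ₂ + 3sρ₀)`, and `a·ρ₀² + b·ρ₂² = 1`,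
the vector `d := b·μ₀ − a·μ₂` satisfies `d × ρ = −3μ₁`, `gcd(dᵢ, ρᵢ) = 1` for all
`i`, and every solution `d'` of `d' × ρ = −3μ₁` equals `d + kρ` for some `k ∈ ℤ`. -/
theorem markov_degree_exists (ρ₀ ρ₁ ρ₂ : ℤ)
    (h₀ : 0 < ρ₀) (h₁ : 0 < ρ₁) (h₂ : 0 < ρ₂)
    (hM : ρ₀ ^ 2 + ρ₁ ^ 2 + ρ₂ ^ 2 = 3 * ρ₀ * ρ₁ * ρ₂)
    (s : ℤ) (hs : s = ρ₁ - 3 * ρ₀ * ρ₂)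
    (a b : ℤ) (hab : a * ρ₀ ^ 2 + b * ρ₂ ^ 2 = 1)
    (d : Fin 3 → ℤ)
    (hd : d = b • ![ρ₀ + 3 * s * ρ₂, s, ρ₂] - a • ![ρ₀, s, ρ₂ + 3 * s * ρ₀]) :
    cross3 d ![ρ₀, ρ₁, ρ₂] = (-3 : ℤ) • ![ρ₀, s, ρ₂] ∧
    (Int.gcd (d 0) ρ₀ = 1 ∧ Int.gcd (d 1) ρ₁ = 1 ∧ Int.gcd (d 2) ρ₂ = 1) ∧
    ∀ d' : Fin 3 → ℤ, cross3 d' ![ρ₀, ρ₁, ρ₂] = (-3 : ℤ) • ![ρ₀, s, ρ₂] →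
      ∃ k : ℤ, d' = d + k • ![ρ₀, ρ₁, ρ₂] :=
  markov_degree_exists_general ρ₀ ρ₁ ρ₂ hM s hs a b hab d hd
end

section
/- Let ρ = (ρ₀, ρ₁, ρ₂) be a Markov triple, s := ρ₁ − 3ρ₀ρ₂, and μ₁ := (ρ₀, s, ρ₂). Then there is no d = (d₀, d₁, d₂) ∈ ℤ³ such that d × ρ = −μ₁ and gcd(dᵢ, 3ρᵢ) = 1 for all i ∈ {0,1,2}. (This is the numerical core of the theorem that for an elliptic helix of polynomial growth the rank triple must itself be a Markov triple, ruling out the case rank vector = 3ρ.) -/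
open Matrix

theorem smul_eq_zero_of_cross_eq_neg {R : Type*} [CommRing R] {d r : Fin 3 → R}
    (h : d ⨯₃ r = -r) : (1 + d ⬝ᵥ d) • r = 0 := by
  have hdr : d ⬝ᵥ r = 0 := by simpa [h] using dot_self_cross d r
  have hcc := cross_cross_eq_smul_sub_smul' d d r
  rw [h, map_neg, h, hdr, zero_smul, zero_sub, neg_neg] at hcc
  rw [add_smul, one_smul, eq_neg_iff_add_eq_zero.1 hcc]

theorem dotProduct_self_eq_zero_of_forall_ne_zero {d : Fin 3 → ZMod 3} (hd : ∀ i, d i ≠ 0) :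
    d ⬝ᵥ d = 0 := by
  have hsq : ∀ x : ZMod 3, x ≠ 0 → x * x = 1 := by decide
  simp only [dotProduct, Fin.sum_univ_three, hsq _ (hd _)]
  decide

theorem eq_zero_of_cross_eq_neg {d r : Fin 3 → ZMod 3} (hd : ∀ i, d i ≠ 0)
    (h : d ⨯₃ r = -r) : r = 0 := by
  simpa [dotProduct_self_eq_zero_of_forall_ne_zero hd] using smul_eq_zero_of_cross_eq_neg h

theorem RingHom.comp_cross {R S : Type*} [CommRing R] [CommRing S] (f : R →+* S)
    (a b : Fin 3 → R) : f ∘ (a ⨯₃ b) = (f ∘ a) ⨯₃ (f ∘ b) := by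
  ext i
  fin_cases i <;> simp [cross_apply]

theorem exists_three_dvd_of_cross_eq_neg_add_three_smul {ρ d w : Fin 3 → ℤ}
    (hρ : ∃ i, ¬ 3 ∣ ρ i) (h : d ⨯₃ ρ = -ρ + 3 • w) : ∃ i, 3 ∣ d i := by
  by_contra! hd
  obtain ⟨i, hi⟩ := hρ
  let f := Int.castRingHom (ZMod 3)
  have hf (x : ℤ) : f x = 0 ↔ 3 ∣ x := ZMod.intCast_zmod_eq_zero_iff_dvd x 3
  have hfρ : f ∘ ρ = 0 := by
    refine eq_zero_of_cross_eq_neg (d := f ∘ d) (fun i => (hf _).not.2 (hd i)) ?_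
    rw [← RingHom.comp_cross, h]
    ext j
    simp [f, show (3 : ZMod 3) = 0 from rfl]
  exact hi ((hf _).1 (congrFun hfρ i))

theorem exists_three_dvd_of_cross_eq {ρ d : Fin 3 → ℤ} (hρ : ρ ≠ 0)
    (h : d ⨯₃ ρ = -![ρ 0, ρ 1 - 3 * ρ 0 * ρ 2, ρ 2]) : ∃ i, 3 ∣ d i := by
  obtain ⟨ρ', hρρ', hgcd⟩ := Finset.univ.extract_gcd ρ Finset.univ_nonempty
  set g := Finset.univ.gcd ρ
  have hg : g ≠ 0 := fun hg =>
    hρ (funext fun i => Finset.gcd_eq_zero_iff.1 hg i (Finset.mem_univ i))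
  have hρ' : ρ = g • ρ' := funext fun i => hρρ' i (Finset.mem_univ i)
  refine exists_three_dvd_of_cross_eq_neg_add_three_smul (ρ := ρ')
    (w := ![0, g * ρ' 0 * ρ' 2, 0]) ?_ ?_
  · by_contra! h3
    have h3g := Finset.dvd_gcd (s := Finset.univ) fun i _ => h3 i
    rw [hgcd] at h3g
    norm_num at h3g
  · apply smul_right_injective _ hg
    dsimp only
    rw [← map_smul, ← hρ', h, hρ']
    ext i
    fin_cases i <;> simp [vecHead, vecTail]
    ring

theorem no_degree_for_triple_rank_general (ρ₀ ρ₁ ρ₂ : ℤ)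
    (h₀ : 0 < ρ₀)
    (s : ℤ) (hs : s = ρ₁ - 3 * ρ₀ * ρ₂) :
    ¬ ∃ d : Fin 3 → ℤ, cross3 d ![ρ₀, ρ₁, ρ₂] = -![ρ₀, s, ρ₂] ∧
      Int.gcd (d 0) (3 * ρ₀) = 1 ∧ Int.gcd (d 1) (3 * ρ₁) = 1 ∧
      Int.gcd (d 2) (3 * ρ₂) = 1 := by
  rintro ⟨d, hd, g₀, g₁, g₂⟩
  have not_dvd {x y : ℤ} (hxy : Int.gcd x (3 * y) = 1) : ¬ 3 ∣ x := fun h3 =>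
    Int.isUnit_iff.not.2 (by norm_num) <|
      (Int.isCoprime_iff_gcd_eq_one.2 hxy).isUnit_of_dvd' h3 (dvd_mul_right 3 y)
  have hρ : ![ρ₀, ρ₁, ρ₂] ≠ 0 := fun h => h₀.ne' (congrFun h 0)
  rw [cross3, ← cross_apply, hs] at hd
  obtain ⟨i, hi⟩ := exists_three_dvd_of_cross_eq hρ hd
  fin_cases i
  exacts [not_dvd g₀ hi, not_dvd g₁ hi, not_dvd g₂ hi]

/-- For a Markov triple `ρ`, with `s := ρ₁ − 3ρ₀ρ₂` and `μ₁ := (ρ₀, s, ρ₂)`, there is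
no `d ∈ ℤ³` with `d × ρ = −μ₁` and `gcd(dᵢ, 3ρᵢ) = 1` for all `i ∈ {0,1,2}`. -/
theorem no_degree_for_triple_rank (ρ₀ ρ₁ ρ₂ : ℤ)
    (h₀ : 0 < ρ₀) (h₁ : 0 < ρ₁) (h₂ : 0 < ρ₂)
    (hM : ρ₀ ^ 2 + ρ₁ ^ 2 + ρ₂ ^ 2 = 3 * ρ₀ * ρ₁ * ρ₂)
    (s : ℤ) (hs : s = ρ₁ - 3 * ρ₀ * ρ₂) :
    ¬ ∃ d : Fin 3 → ℤ, cross3 d ![ρ₀, ρ₁, ρ₂] = -![ρ₀, s, ρ₂] ∧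
      Int.gcd (d 0) (3 * ρ₀) = 1 ∧ Int.gcd (d 1) (3 * ρ₁) = 1 ∧
      Int.gcd (d 2) (3 * ρ₂) = 1 :=
  no_degree_for_triple_rank_general ρ₀ ρ₁ ρ₂ h₀ s hs
end

section
/- Let Δ : ℤ → ℤ be 3-periodic with Δᵢ ≥ 1 for all i, and let r : ℤ → ℤ satisfy the rank recursion. Suppose r₁ ≥ 1, r_{i+1} > rᵢ for all i ≥ 1, rᵢ > r_{i+1} for all i ≤ 0, and Δ₁·r₁ − r₀ > 0 and Δ₂·r₁ − r₂ > 0. Then for every i ∈ ℤ, rᵢ ≥ 1 and r'ᵢ := Δ_{i−1}·r_{i−1} − r_{i−2} > 0. -/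
/-- If `Δ : ℤ → ℤ` is 3-periodic with `Δᵢ ≥ 1`, `r` satisfies the rank recursion
`r_{i+3} = rᵢ − Δ_{i+1}·r_{i+1} + Δᵢ·r_{i+2}`, `r₁ ≥ 1`, `r` is increasing for `i ≥ 1`
and decreasing for `i ≤ 0`, and `Δ₁r₁ − r₀ > 0`, `Δ₂r₁ − r₂ > 0`, then all ranks `rᵢ`
are at least 1 and all mutation ranks `r'ᵢ = Δ_{i−1}·r_{i−1} − r_{i−2}` are positive. -/
theorem convexity_criterion (Δ r : ℤ → ℤ)
    (hΔper : ∀ i : ℤ, Δ (i + 3) = Δ i) (hΔpos : ∀ i : ℤ, 1 ≤ Δ i)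
    (hrec : ∀ i : ℤ, r (i + 3) = r i - Δ (i + 1) * r (i + 1) + Δ i * r (i + 2))
    (hr1 : 1 ≤ r 1)
    (hinc : ∀ i : ℤ, 1 ≤ i → r i < r (i + 1))
    (hdec : ∀ i : ℤ, i ≤ 0 → r (i + 1) < r i)
    (h1 : 0 < Δ 1 * r 1 - r 0) (h2 : 0 < Δ 2 * r 1 - r 2) :
    ∀ i : ℤ, 1 ≤ r i ∧ 0 < Δ (i - 1) * r (i - 1) - r (i - 2) := by
  -- all ranks are at least 1
  have hup : ∀ i : ℤ, 1 ≤ i → 1 ≤ r i :=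
    Int.le_induction hr1 (fun n hn ih => le_trans ih (le_of_lt (hinc n hn)))
  have hdown : ∀ i : ℤ, i ≤ 1 → 1 ≤ r i :=
    Int.le_induction_down hr1
      (fun n hn ih => by
        have h := hdec (n - 1) (by omega)
        rw [sub_add_cancel] at h
        exact le_trans ih (le_of_lt h))
  have hr : ∀ i : ℤ, 1 ≤ r i := by
    intro i
    rcases le_or_gt i 1 with h | h
    · exact hdown i h
    · exact hup i (by omega)
  -- key identity: Δ(i-1)·r(i-1) - r(i-2) = Δ(i-2)·r i - r(i+1)
  have key : ∀ i : ℤ, Δ (i - 1) * r (i - 1) - r (i - 2) = Δ (i - 2) * r i - r (i + 1) := by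
    intro i
    have h := hrec (i - 2)
    have e1 : i - 2 + 3 = i + 1 := by ring
    have e2 : i - 2 + 1 = i - 1 := by ring
    have e3 : i - 2 + 2 = i := by ring
    rw [e1, e2, e3] at h
    linarith
  intro i
  refine ⟨hr i, ?_⟩
  rcases lt_trichotomy i 2 with h | h | h
  · -- i ≤ 1 : use the second expression
    rw [key i]
    rcases eq_or_lt_of_le (show i ≤ 1 by omega) with h' | h'
    · subst h'
      have hΔ : Δ (1 - 2 : ℤ) = Δ 2 := by
        have := hΔper (-1)
        norm_num at this ⊢
        omega
      rw [hΔ]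
      simpa using h2
    · have hmono := hdec i (by omega)
      have hΔi := hΔpos (i - 2)
      have hri := hr i
      nlinarith
  · -- i = 2 : base case h1
    subst h
    simpa using h1
  · -- i ≥ 3 : increasing side
    have hmono := hinc (i - 2) (by omega)
    have hΔi := hΔpos (i - 1)
    have hri := hr (i - 1)
    have e : i - 2 + 1 = i - 1 := by ring
    rw [e] at hmono
    nlinarith
end

section
/- Let Δ : ℤ → ℤ be 3-periodic with Δᵢ ≥ 1 for all i, and let r : ℤ → ℤ satisfy the rank recursion. Suppose r₁ ≥ 1, Δ₁·r₁ − r₀ > 0, Δ₂·r₁ − r₂ > 0, and there exists a real number l > 1 such that (Δᵢ : ℝ) − Δⱼ/l > l for all distinct i, j ∈ {1,2,3}, and (r₀ : ℝ) > l·r₁ and (r₂ : ℝ) > l·r₁. Then for every i ∈ ℤ, rᵢ ≥ 1 and r'ᵢ := Δ_{i−1}·r_{i−1} − r_{i−2} > 0. -/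
/-! The growth condition `Δᵢ − Δ_{i+1}/l > l` makes `l · r_{k+1} < r_{k+2}` propagate along the
recursion: `r_{k+3} − l·r_{k+2} = r_k + (Δ_k − l)·r_{k+2} − Δ_{k+1}·r_{k+1}`, and
`(Δ_k − l)·r_{k+2} > (l·Δ_k − l²)·r_{k+1} > Δ_{k+1}·r_{k+1}`. Started from `r₀, r₁, r₂` this gives
positive ranks growing by a factor `l` to the right. Reading the recursion backwards is again a
rank recursion (for the reflected `Δ`), so the same argument applied to `r₂, r₁, r₀` gives growth
to the left. A mutation rank is positive wherever the ranks are increasing (or, through the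
recursion, decreasing); the two indices in between are the hypotheses on `Δ₁r₁ − r₀`, `Δ₂r₁ − r₂`. -/

def RankRecursion (Δ r : ℤ → ℤ) : Prop :=
  ∀ i : ℤ, r (i + 3) = r i - Δ (i + 1) * r (i + 1) + Δ i * r (i + 2)

def mutationRank (Δ r : ℤ → ℤ) (i : ℤ) : ℤ :=
  Δ (i - 1) * r (i - 1) - r (i - 2)

def GrowsAt (l : ℝ) (r : ℤ → ℤ) (k : ℤ) : Prop :=
  0 < r k ∧ 0 < r (k + 1) ∧ l * r (k + 1) < r (k + 2)

theorem lt_sub_div_of_periodic {Δ : ℤ → ℤ} {l : ℝ} (hΔ : Function.Periodic Δ 3)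
    (hgrow : ∀ i j : ℤ, i ∈ ({1, 2, 3} : Set ℤ) → j ∈ ({1, 2, 3} : Set ℤ) → i ≠ j →
      l < (Δ i : ℝ) - (Δ j : ℝ) / l)
    {i j : ℤ} (hij : i % 3 ≠ j % 3) : l < (Δ i : ℝ) - (Δ j : ℝ) / l := by
  have hrep : ∀ k, Δ k = Δ ((k - 1) % 3 + 1) := fun k => by
    rw [← hΔ.sub_int_mul_eq ((k - 1) / 3), Int.cast_id]
    congr 1
    omega
  rw [hrep i, hrep j]
  exact hgrow _ _ (by simp only [Set.mem_insert_iff, Set.mem_singleton_iff]; omega)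
    (by simp only [Set.mem_insert_iff, Set.mem_singleton_iff]; omega) (by omega)

theorem growth_step {l a b c Δa Δb : ℝ} (hl : 0 < l) (hΔb : 0 ≤ Δb) (hΔ : l < Δa - Δb / l)
    (ha : 0 < a) (hb : 0 ≤ b) (hc : l * b < c) : l * c < a - Δb * b + Δa * c := by
  have hΔl : l < Δa := by linarith [div_nonneg hΔb hl.le]
  have hΔl' : l * l + Δb < l * Δa := by
    have := mul_lt_mul_of_pos_left hΔ hl
    rw [mul_sub, mul_div_cancel₀ _ hl.ne'] at this
    linarith
  nlinarith [mul_lt_mul_of_pos_left hc (sub_pos.2 hΔl), mul_nonneg hb (sub_pos.2 hΔl').le]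

namespace RankRecursion

variable {Δ r : ℤ → ℤ}

theorem reflect (hrec : RankRecursion Δ r) (c : ℤ) :
    RankRecursion (fun k => Δ (c - 2 - k)) (fun k => r (c - k)) := fun k => by
  have h := hrec (c - k - 3)
  simp only [show c - k - 3 + 3 = c - k by ring, show c - k - 3 + 1 = c - 2 - k by ring,
    show c - k - 3 + 2 = c - (k + 1) by ring] at h
  simp only [show c - (k + 3) = c - k - 3 by ring, show c - 2 - (k + 1) = c - k - 3 by ring,
    show c - (k + 2) = c - 2 - k by ring]
  linarith

theorem mutationRank_eq (hrec : RankRecursion Δ r) (i : ℤ) :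
    mutationRank Δ r i = Δ (i - 2) * r i - r (i + 1) := by
  have h := hrec (i - 2)
  rw [show i - 2 + 3 = i + 1 by ring, show i - 2 + 1 = i - 1 by ring,
    show i - 2 + 2 = i by ring] at h
  unfold mutationRank
  linarith

theorem mutationRank_reflect (hrec : RankRecursion Δ r) (c k : ℤ) :
    mutationRank (fun k => Δ (c - 2 - k)) (fun k => r (c - k)) k =
      mutationRank Δ r (c - k + 1) := by
  rw [hrec.mutationRank_eq]
  simp only [mutationRank]
  rw [show c - 2 - (k - 1) = c - k + 1 - 2 by ring, show c - (k - 1) = c - k + 1 by ring,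
    show c - (k - 2) = c - k + 1 + 1 by ring]

theorem growsAt_succ (hrec : RankRecursion Δ r) {l : ℝ} (hl : 0 < l) (hΔpos : ∀ i, 0 ≤ Δ i)
    (hΔ : ∀ i, l < (Δ i : ℝ) - (Δ (i + 1) : ℝ) / l) {k : ℤ} (h : GrowsAt l r k) :
    GrowsAt l r (k + 1) := by
  obtain ⟨h0, h1, h2⟩ := h
  have hnext : l * (r (k + 2) : ℝ) < r (k + 3) := by
    rw [hrec k]
    push_cast
    exact growth_step hl (by exact_mod_cast hΔpos _) (hΔ k) (by exact_mod_cast h0)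
      (by exact_mod_cast h1.le) h2
  have hpos : (0 : ℝ) < r (k + 2) := lt_of_le_of_lt (by positivity) h2
  rw [GrowsAt, show k + 1 + 1 = k + 2 by ring, show k + 1 + 2 = k + 3 by ring]
  exact ⟨h1, by exact_mod_cast hpos, hnext⟩

theorem growsAt_of_le (hrec : RankRecursion Δ r) {l : ℝ} (hl : 0 < l) (hΔpos : ∀ i, 0 ≤ Δ i)
    (hΔ : ∀ i, l < (Δ i : ℝ) - (Δ (i + 1) : ℝ) / l) {n : ℤ} (hn : GrowsAt l r n) :
    ∀ k, n ≤ k → GrowsAt l r k :=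
  Int.leInduction hn fun _ _ h => hrec.growsAt_succ hl hΔpos hΔ h

end RankRecursion

theorem GrowsAt.mutationRank_pos {Δ r : ℤ → ℤ} {l : ℝ} {k : ℤ} (h : GrowsAt l r k)
    (hl : 1 ≤ l) (hΔ : 1 ≤ Δ (k + 2)) : 0 < mutationRank Δ r (k + 3) := by
  obtain ⟨-, h1, h2⟩ := h
  have hlt : r (k + 1) < r (k + 2) := by
    have : (r (k + 1) : ℝ) ≤ l * r (k + 1) := le_mul_of_one_le_left (by positivity) hl
    exact_mod_cast this.trans_lt h2
  rw [mutationRank, show k + 3 - 1 = k + 2 by ring, show k + 3 - 2 = k + 1 by ring]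
  nlinarith

/-- Growth criterion for generation of an elliptic helix: if `Δ : ℤ → ℤ` is 3-periodic
with `Δᵢ ≥ 1`, `r` satisfies the rank recursion, `r₁ ≥ 1`, `Δ₁r₁ − r₀ > 0`,
`Δ₂r₁ − r₂ > 0`, and there is a real `l > 1` with `Δᵢ − Δⱼ/l > l` for all distinct
`i, j ∈ {1,2,3}` and `r₀ > l·r₁`, `r₂ > l·r₁`, then all ranks `rᵢ ≥ 1` and all
mutation ranks `r'ᵢ = Δ_{i−1}·r_{i−1} − r_{i−2}` are positive. -/
theorem growth_criterion (Δ r : ℤ → ℤ)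
    (hΔper : ∀ i : ℤ, Δ (i + 3) = Δ i) (hΔpos : ∀ i : ℤ, 1 ≤ Δ i)
    (hrec : ∀ i : ℤ, r (i + 3) = r i - Δ (i + 1) * r (i + 1) + Δ i * r (i + 2))
    (hr1 : 1 ≤ r 1)
    (h1 : 0 < Δ 1 * r 1 - r 0) (h2 : 0 < Δ 2 * r 1 - r 2)
    (l : ℝ) (hl : 1 < l)
    (hgrow : ∀ i j : ℤ, i ∈ ({1, 2, 3} : Set ℤ) → j ∈ ({1, 2, 3} : Set ℤ) → i ≠ j →
      l < (Δ i : ℝ) - (Δ j : ℝ) / l)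
    (hr0 : l * (r 1 : ℝ) < (r 0 : ℝ)) (hr2 : l * (r 1 : ℝ) < (r 2 : ℝ)) :
    ∀ i : ℤ, 1 ≤ r i ∧ 0 < Δ (i - 1) * r (i - 1) - r (i - 2) := by
  have hrec : RankRecursion Δ r := hrec
  have hl0 : 0 < l := by linarith
  have hΔnn : ∀ i, 0 ≤ Δ i := fun i => by linarith [hΔpos i]
  have hΔ {i j : ℤ} (hij : i % 3 ≠ j % 3) := lt_sub_div_of_periodic hΔper hgrow hij
  have hr1' : (0 : ℝ) < r 1 := by exact_mod_cast hr1
  have right : ∀ k, 0 ≤ k → GrowsAt l r k := hrec.growsAt_of_le hl0 hΔnn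
    (fun i => hΔ (by omega)) ⟨by exact_mod_cast (by nlinarith : (0 : ℝ) < r 0), hr1, hr2⟩
  have left : ∀ k, 0 ≤ k → GrowsAt l (fun k => r (2 - k)) k :=
    (hrec.reflect 2).growsAt_of_le hl0 (fun _ => hΔnn _) (fun i => hΔ (by omega))
      ⟨by exact_mod_cast (by nlinarith : (0 : ℝ) < r 2), hr1, hr0⟩
  intro i
  refine ⟨?_, show 0 < mutationRank Δ r i from ?_⟩
  · rcases le_or_gt 0 i with hi | hi
    · exact (right i hi).1
    · exact (by simpa using (left (2 - i) (by omega)).1 : 0 < r i)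
  obtain hi | rfl | rfl | hi : i ≤ 0 ∨ i = 1 ∨ i = 2 ∨ 3 ≤ i := by omega
  · have := (left (-i) (by omega)).mutationRank_pos (Δ := fun k => Δ (2 - 2 - k)) hl.le
      (hΔpos _)
    rwa [hrec.mutationRank_reflect, show 2 - (-i + 3) + 1 = i by ring] at this
  · have hΔ2 : Δ (-1) = Δ 2 := by simpa using (hΔper (-1)).symm
    simpa [hrec.mutationRank_eq, hΔ2] using h2
  · exact h1
  · simpa using (right (i - 3) (by omega)).mutationRank_pos hl.le (hΔpos _)
end

section
/- Let a ≥ 0, r ≥ 3 and d be integers with d + a − r ≥ 3 and d > (a+1)·(2r+1) + 4. Let Δ : ℤ → ℤ be the 3-periodic sequence with Δ₁ = d + a + 1, Δ₂ = d and Δ₃ = d − (a+1)·r, and let ρ : ℤ → ℤ satisfy the rank recursion with initial values ρ(0) = d + a − r, ρ(1) = 1, ρ(2) = r. Then for every i ∈ ℤ, ρ(i) ≥ 1 and Δ_{i−1}·ρ(i−1) − ρ(i−2) > 0. (This is the numerical content of the statement that the numerical seed ((−d−a−1, d+a−r), (0,1), (d, r)) generates an elliptic helix.) -/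
/-- The numerical seed `((−d−a−1, d+a−r), (0,1), (d, r))` generates an elliptic helix:
with `Δ₁ = d+a+1`, `Δ₂ = d`, `Δ₃ = d−(a+1)r` extended 3-periodically and `ρ` satisfying
the rank recursion with `ρ(0) = d+a−r`, `ρ(1) = 1`, `ρ(2) = r`, all ranks `ρ(i)` are at
least 1 and all mutation ranks `Δ_{i−1}·ρ(i−1) − ρ(i−2)` are positive. -/
theorem seed_generates_helix_nonequigen (a r d : ℤ)
    (ha : 0 ≤ a) (hr : 3 ≤ r) (hdar : 3 ≤ d + a - r)
    (hd : (a + 1) * (2 * r + 1) + 4 < d)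
    (Δ : ℤ → ℤ) (hΔper : ∀ i : ℤ, Δ (i + 3) = Δ i)
    (hΔ1 : Δ 1 = d + a + 1) (hΔ2 : Δ 2 = d) (hΔ3 : Δ 3 = d - (a + 1) * r)
    (ρ : ℤ → ℤ)
    (hrec : ∀ i : ℤ, ρ (i + 3) = ρ i - Δ (i + 1) * ρ (i + 1) + Δ i * ρ (i + 2))
    (hρ0 : ρ 0 = d + a - r) (hρ1 : ρ 1 = 1) (hρ2 : ρ 2 = r) :
    ∀ i : ℤ, 1 ≤ ρ i ∧ 0 < Δ (i - 1) * ρ (i - 1) - ρ (i - 2) := by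
  have hper : Function.Periodic Δ 3 := fun i => hΔper i
  have hΔvals : ∀ i : ℤ, Δ i = d + a + 1 ∨ Δ i = d ∨ Δ i = d - (a + 1) * r := by
    intro i
    have h1 : Δ (i - (i / 3) * 3) = Δ i := hper.sub_int_mul_eq (i / 3)
    have h2 : i - (i / 3) * 3 = i % 3 := by omega
    rw [h2] at h1
    have h3 : i % 3 = 0 ∨ i % 3 = 1 ∨ i % 3 = 2 := by omega
    have h0 : Δ (0 : ℤ) = Δ 3 := by have := hΔper 0; rw [← this]; norm_num
    rcases h3 with h | h | h <;> rw [h] at h1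
    · right; right; rw [← h1, h0, hΔ3]
    · left; rw [← h1, hΔ1]
    · right; left; rw [← h1, hΔ2]
  have hL : ∀ i : ℤ, d - (a + 1) * r ≤ Δ i ∧ Δ i ≤ d + a + 1 := by
    intro i
    rcases hΔvals i with h | h | h <;> rw [h] <;> constructor <;> nlinarith
  have hLbig : 5 ≤ d - (a + 1) * (2 * r + 1) := by nlinarith
  have hLpos : 2 ≤ d - (a + 1) * r := by nlinarith
  -- forward: for all j ≥ 1
  have fwd : ∀ j : ℤ, 1 ≤ j → 1 ≤ ρ j ∧ 2 * ρ j ≤ ρ (j + 1) ∧ 2 * ρ (j + 1) ≤ ρ (j + 2) := by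
    refine Int.le_induction ?_ ?_
    ·
      have h3 : ρ (3 : ℤ) = ρ 0 - Δ 1 * ρ 1 + Δ 0 * ρ 2 := by
        have := hrec 0; norm_num at this; exact this
      have h0 : Δ (0 : ℤ) = d - (a + 1) * r := by
        have := hΔper 0; norm_num at this; rw [← this, hΔ3]
      norm_num [hρ1, hρ2]
      refine ⟨by omega, ?_⟩
      rw [h3, h0, hΔ1, hρ0, hρ1, hρ2]; nlinarith
    · intro j hj ih
      obtain ⟨ih1, ih2, ih3⟩ := ih
      have hrecj : ρ (j + 3) = ρ j - Δ (j + 1) * ρ (j + 1) + Δ j * ρ (j + 2) := hrec j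
      have hb1 := hL j
      have hb2 := hL (j + 1)
      have e2 : j + 1 + 1 = j + 2 := by ring
      have e3 : j + 1 + 2 = j + 3 := by ring
      rw [e2, e3]
      have hρj1 : 2 ≤ ρ (j + 1) := by omega
      have hρj2 : 4 ≤ ρ (j + 2) := by omega
      refine ⟨by omega, ih3, ?_⟩
      nlinarith [mul_le_mul_of_nonneg_left ih3 (le_trans (by omega : (0:ℤ) ≤ d - (a+1)*r) hb2.1),
        mul_le_mul_of_nonneg_right hb2.2 (by omega : (0:ℤ) ≤ ρ (j + 2)),
        mul_le_mul_of_nonneg_right hb1.1 (by omega : (0:ℤ) ≤ ρ (j + 2))]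
  -- backward: for all j ≤ 0
  have bwd : ∀ j : ℤ, j ≤ 0 → 2 * ρ (j + 1) ≤ ρ j ∧ 1 ≤ ρ (j + 1) ∧ 1 ≤ ρ (j + 2) := by
    refine Int.le_induction_down ?_ ?_
    · norm_num [hρ0, hρ1, hρ2]; omega
    · intro j hj ih
      obtain ⟨ih1, ih2, ih3⟩ := ih
      have hrecj : ρ (j - 1 + 3) = ρ (j - 1) - Δ (j - 1 + 1) * ρ (j - 1 + 1) + Δ (j - 1) * ρ (j - 1 + 2) := hrec (j - 1)
      have e0 : j - 1 + 3 = j + 2 := by ring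
      have e0' : j - 1 + 1 = j := by ring
      have e0'' : j - 1 + 2 = j + 1 := by ring
      rw [e0, e0', e0''] at hrecj
      have hb1 := hL j
      have hb2 := hL (j - 1)
      rw [e0', e0'']
      have hρj : 2 ≤ ρ j := by omega
      refine ⟨?_, by omega, by omega⟩
      nlinarith [mul_le_mul_of_nonneg_left ih1 (le_trans (by omega : (0:ℤ) ≤ d - (a+1)*r) hb2.1),
        mul_le_mul_of_nonneg_right hb2.2 (by omega : (0:ℤ) ≤ ρ j),
        mul_le_mul_of_nonneg_right hb1.1 (by omega : (0:ℤ) ≤ ρ j)]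
  have all_pos : ∀ i : ℤ, 1 ≤ ρ i := by
    intro i
    rcases le_or_gt i 0 with h | h
    · have := (bwd (i - 1) (by omega)).2.1
      have e : i - 1 + 1 = i := by ring
      rwa [e] at this
    · exact (fwd i (by omega)).1
  -- mutation rank identity
  have mid : ∀ i : ℤ, Δ (i - 1) * ρ (i - 1) - ρ (i - 2) = Δ (i - 2) * ρ i - ρ (i + 1) := by
    intro i
    have h := hrec (i - 2)
    have e1 : i - 2 + 3 = i + 1 := by ring
    have e2 : i - 2 + 1 = i - 1 := by ring
    have e3 : i - 2 + 2 = i := by ring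
    rw [e1, e2, e3] at h
    rw [h]; ring
  intro i
  refine ⟨all_pos i, ?_⟩
  rcases le_or_gt i 0 with h | h
  · rw [mid i]
    have h1 := (bwd i h).1
    have h2 := all_pos (i + 1)
    have h3 := all_pos i
    have h4 := (hL (i - 2)).1
    nlinarith [mul_le_mul_of_nonneg_right (le_trans hLpos h4) (by omega : (0:ℤ) ≤ ρ i)]
  · rcases eq_or_lt_of_le (by omega : (1 : ℤ) ≤ i) with h1 | h1
    · subst h1
      rw [mid 1]
      have hm1 : Δ (1 - 2 : ℤ) = Δ 2 := by
        have := hΔper (-1); norm_num at this ⊢; rw [← this]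
      rw [hm1, hΔ2, hρ1]
      have e : (1 : ℤ) + 1 = 2 := by norm_num
      rw [e, hρ2]
      nlinarith
    · rcases eq_or_lt_of_le (by omega : (2 : ℤ) ≤ i) with h2 | h2
      · subst h2
        norm_num [hρ1, hρ0, hΔ1]
        linarith
      · have hrat := (fwd (i - 2) (by omega)).2.1
        have e : i - 2 + 1 = i - 1 := by ring
        rw [e] at hrat
        have hp2 := all_pos (i - 2)
        have hΔ := (hL (i - 1)).1
        nlinarith [mul_le_mul_of_nonneg_right (le_trans hLpos hΔ) (by omega : (0:ℤ) ≤ ρ (i-1))]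
end
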